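/- arXiv:1712.05662 — 9 statements merged into one kernel-verified Lean document; each statement's English description precedes it below -/
import Mathlib

section
/- Under the standing assumptions, the sequence {‖U_i‖}_{i=1}^n is strictly increasing, i.e. ‖U_i‖ < ‖U_{i+1}‖ for i = 1,…,n−1. -/
open scoped Matrix
attribute [local instance] Matrix.linftyOpNormedRing

/-- The block tridiagonal matrix with diagonal blocks `A 1, …, A n`, superdiagonal blocks
`B 1, …, B (n-1)` and subdiagonal blocks `C 1, …, C (n-1)`. -/
noncomputable def blockTridiag (n m : ℕ) (A B C : ℕ → Matrix (Fin m) (Fin m) ℂ) :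
    Matrix (Fin n × Fin m) (Fin n × Fin m) ℂ :=
  Matrix.of fun p q =>
    if p.1 = q.1 then A ((p.1 : ℕ) + 1) p.2 q.2
    else if (p.1 : ℕ) + 1 = (q.1 : ℕ) then B ((p.1 : ℕ) + 1) p.2 q.2
    else if (q.1 : ℕ) + 1 = (p.1 : ℕ) then C ((q.1 : ℕ) + 1) p.2 q.2
    else 0

/-!
The recurrence says `C_{i-1} U_{i-1} + A_i U_i + B_i U_{i+1} = 0`, so
`U_i = -A_i⁻¹C_{i-1} U_{i-1} - A_i⁻¹B_i U_{i+1}` and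
`‖U_i‖ ≤ a ‖U_{i-1}‖ + b ‖U_{i+1}‖` with `a + b ≤ 1`. If `‖U_{i+1}‖ ≤ ‖U_i‖` while
`‖U_{i-1}‖ < ‖U_i‖`, the right-hand side would be `< (a + b) ‖U_i‖ ≤ ‖U_i‖`, because `a > 0`
(`A_i⁻¹C_{i-1}` is invertible). The first row has no `C`-term, and `b < 1` starts the induction.
-/

namespace Matrix

variable {ι R : Type*} [Fintype ι] [DecidableEq ι] [NormedField R]
  {A B C X Y Z : Matrix ι ι R}

theorem eq_of_three_term_recurrence (hA : IsUnit A) (hB : IsUnit B)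
    (hZ : Z = -(B⁻¹ * (C * X + A * Y))) :
    Y = -(A⁻¹ * C * X) - A⁻¹ * B * Z := by
  have hBZ : B * Z = -(C * X + A * Y) := by
    rw [hZ, Matrix.mul_neg, ← Matrix.mul_assoc,
      mul_nonsing_inv _ ((isUnit_iff_isUnit_det B).mp hB), Matrix.one_mul]
  calc Y = A⁻¹ * (A * Y) := by
        rw [← Matrix.mul_assoc, nonsing_inv_mul _ ((isUnit_iff_isUnit_det A).mp hA),
          Matrix.one_mul]
    _ = A⁻¹ * (-(C * X) - B * Z) := by rw [hBZ]; abel_nf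
    _ = -(A⁻¹ * C * X) - A⁻¹ * B * Z := by noncomm_ring

theorem norm_le_of_three_term_recurrence (hA : IsUnit A) (hB : IsUnit B)
    (hZ : Z = -(B⁻¹ * (C * X + A * Y))) :
    ‖Y‖ ≤ ‖A⁻¹ * C‖ * ‖X‖ + ‖A⁻¹ * B‖ * ‖Z‖ := by
  rw [eq_of_three_term_recurrence hA hB hZ]
  calc ‖-(A⁻¹ * C * X) - A⁻¹ * B * Z‖ ≤ ‖A⁻¹ * C * X‖ + ‖A⁻¹ * B * Z‖ :=
        (norm_sub_le _ _).trans_eq (by rw [norm_neg])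
    _ ≤ ‖A⁻¹ * C‖ * ‖X‖ + ‖A⁻¹ * B‖ * ‖Z‖ := add_le_add (norm_mul_le _ _) (norm_mul_le _ _)

theorem norm_lt_of_three_term_recurrence (hA : IsUnit A) (hB : IsUnit B)
    (hZ : Z = -(B⁻¹ * (C * X + A * Y)))
    (hlt : ‖A⁻¹ * C‖ * ‖X‖ < (1 - ‖A⁻¹ * B‖) * ‖Y‖) :
    ‖Y‖ < ‖Z‖ := by
  have hle := norm_le_of_three_term_recurrence hA hB hZ
  by_contra! hZY
  nlinarith [mul_le_mul_of_nonneg_left hZY (norm_nonneg (A⁻¹ * B))]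

theorem norm_lt_of_first_block_row (hA : IsUnit A) (hB : IsUnit B)
    (hZ : Z = -(B⁻¹ * (A * Y))) (hY : Y ≠ 0) (hAB : ‖A⁻¹ * B‖ < 1) :
    ‖Y‖ < ‖Z‖ :=
  norm_lt_of_three_term_recurrence (C := 0) (X := 0) hA hB (by simpa using hZ) <| by
    rw [norm_zero, mul_zero]
    exact mul_pos (by linarith) (norm_pos_iff.mpr hY)

theorem norm_lt_of_diagonally_dominant_block_row [Nonempty ι] (hA : IsUnit A) (hB : IsUnit B)
    (hC : IsUnit C) (hZ : Z = -(B⁻¹ * (C * X + A * Y)))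
    (hdom : ‖A⁻¹ * C‖ + ‖A⁻¹ * B‖ ≤ 1) (hXY : ‖X‖ < ‖Y‖) :
    ‖Y‖ < ‖Z‖ := by
  refine norm_lt_of_three_term_recurrence hA hB hZ ?_
  have ha : 0 < ‖A⁻¹ * C‖ :=
    norm_pos_iff.mpr ((isUnit_nonsing_inv_iff.mpr hA).mul hC).ne_zero
  calc ‖A⁻¹ * C‖ * ‖X‖ < ‖A⁻¹ * C‖ * ‖Y‖ := mul_lt_mul_of_pos_left hXY ha
    _ ≤ (1 - ‖A⁻¹ * B‖) * ‖Y‖ := mul_le_mul_of_nonneg_right (by linarith) (norm_nonneg _)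

end Matrix

theorem norm_U_strict_mono_general
    (n m : ℕ) (hm : 1 ≤ m)
    (A B C : ℕ → Matrix (Fin m) (Fin m) ℂ)
    (hB : ∀ i, 1 ≤ i → i ≤ n - 1 → IsUnit (B i))
    (hC : ∀ i, 1 ≤ i → i ≤ n - 1 → IsUnit (C i))
    (hAi : ∀ i, 1 ≤ i → i ≤ n → IsUnit (A i))
    (hdom : ∀ i, 1 ≤ i → i ≤ n → ‖(A i)⁻¹ * C (i - 1)‖ + ‖(A i)⁻¹ * B i‖ ≤ 1)
    (hB1 : ‖(A 1)⁻¹ * B 1‖ < 1)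
    (U : ℕ → Matrix (Fin m) (Fin m) ℂ)
    (hU1 : U 1 = 1) (hU2 : U 2 = -((B 1)⁻¹ * A 1))
    (hU : ∀ i, 3 ≤ i → i ≤ n →
      U i = -((B (i - 1))⁻¹ * (C (i - 2) * U (i - 2) + A (i - 1) * U (i - 1)))) :
    ∀ i, 1 ≤ i → i ≤ n - 1 → ‖U i‖ < ‖U (i + 1)‖ := by
  have : Nonempty (Fin m) := Fin.pos_iff_nonempty.mp hm
  intro i hi hin
  induction i, hi using Nat.le_induction with
  | base =>
    refine Matrix.norm_lt_of_first_block_row (hAi 1 le_rfl (by omega)) (hB 1 le_rfl hin)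
      ?_ (hU1 ▸ one_ne_zero) hB1
    rw [hU2, hU1, Matrix.mul_one]
  | succ k hk ih =>
    have hrec := hU (k + 2) (by omega) (by omega)
    have hdomk := hdom (k + 1) (by omega) (by omega)
    rw [show k + 2 - 1 = k + 1 by omega, show k + 2 - 2 = k by omega] at hrec
    rw [Nat.add_sub_cancel] at hdomk
    exact Matrix.norm_lt_of_diagonally_dominant_block_row (hAi (k + 1) (by omega) (by omega))
      (hB (k + 1) (by omega) hin) (hC k hk (by omega)) hrec hdomk (ih (by omega))

theorem norm_U_strict_mono
    (n m : ℕ) (hn : 2 ≤ n) (hm : 1 ≤ m)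
    (A B C : ℕ → Matrix (Fin m) (Fin m) ℂ)
    (hC0 : C 0 = 0) (hBn : B n = 0)
    (hAinv : IsUnit (blockTridiag n m A B C))
    (hB : ∀ i, 1 ≤ i → i ≤ n - 1 → IsUnit (B i))
    (hC : ∀ i, 1 ≤ i → i ≤ n - 1 → IsUnit (C i))
    (hAi : ∀ i, 1 ≤ i → i ≤ n → IsUnit (A i))
    (hdom : ∀ i, 1 ≤ i → i ≤ n → ‖(A i)⁻¹ * C (i - 1)‖ + ‖(A i)⁻¹ * B i‖ ≤ 1)
    (hB1 : ‖(A 1)⁻¹ * B 1‖ < 1)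
    (hCn : ‖(A n)⁻¹ * C (n - 1)‖ < 1)
    (U : ℕ → Matrix (Fin m) (Fin m) ℂ)
    (hU1 : U 1 = 1) (hU2 : U 2 = -((B 1)⁻¹ * A 1))
    (hU : ∀ i, 3 ≤ i → i ≤ n →
      U i = -((B (i - 1))⁻¹ * (C (i - 2) * U (i - 2) + A (i - 1) * U (i - 1)))) :
    ∀ i, 1 ≤ i → i ≤ n - 1 → ‖U i‖ < ‖U (i + 1)‖ :=
  norm_U_strict_mono_general n m hm A B C hB hC hAi hdom hB1 U hU1 hU2 hU
end

section
/- Under the standing assumptions, and assuming X_nA_n + X_{n−1}B_{n−1} is invertible so that the Y_i are defined, the sequence {‖Y_i‖}_{i=1}^n is strictly decreasing, i.e. ‖Y_{i+1}‖ < ‖Y_i‖ for i = 1,…,n−1. -/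
/-!
Solving the recurrence for the middle term expresses each `Y (i + 1)` as
`-(A⁻¹ C Y i + A⁻¹ B Y (i + 2))` (and `Y n` as `-(A⁻¹ C Y (n - 1))`), with coefficients of total
norm at most `1` by row block diagonal dominance. At the last row the coefficient has norm `< 1`,
which gives `‖Y n‖ < ‖Y (n - 1)‖` since the invertible `Y n` is nonzero; going down, once
`‖Y (i + 2)‖ < ‖Y (i + 1)‖` is known, the nonzero weight `‖A⁻¹ B‖` on `Y (i + 2)` forces
`‖Y (i + 1)‖ < ‖Y i‖`.
-/

open scoped Matrix
attribute [local instance] Matrix.linftyOpNormedRing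

section NormedRing

variable {R : Type*} [NormedRing R]

theorem norm_lt_of_eq_neg_mul {p y₀ y₁ : R} (h : y₁ = -(p * y₀)) (hp : ‖p‖ < 1)
    (hy₁ : y₁ ≠ 0) : ‖y₁‖ < ‖y₀‖ := by
  have hy₀ : y₀ ≠ 0 := by
    rintro rfl
    exact hy₁ (by rw [h, mul_zero, neg_zero])
  calc ‖y₁‖ ≤ ‖p‖ * ‖y₀‖ := by rw [h, norm_neg]; exact norm_mul_le _ _
    _ < ‖y₀‖ := mul_lt_of_lt_one_left (norm_pos_iff.2 hy₀) hp

theorem norm_lt_of_eq_neg_mul_add_mul {p q y₀ y₁ y₂ : R} (h : y₁ = -(p * y₀ + q * y₂))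
    (hpq : ‖p‖ + ‖q‖ ≤ 1) (hq : q ≠ 0) (h₂₁ : ‖y₂‖ < ‖y₁‖) : ‖y₁‖ < ‖y₀‖ := by
  have hle : ‖y₁‖ ≤ ‖p‖ * ‖y₀‖ + ‖q‖ * ‖y₂‖ := by
    rw [h, norm_neg]
    exact (norm_add_le _ _).trans (add_le_add (norm_mul_le _ _) (norm_mul_le _ _))
  have hq₂ : ‖q‖ * ‖y₂‖ < ‖q‖ * ‖y₁‖ := mul_lt_mul_of_pos_left h₂₁ (norm_pos_iff.2 hq)
  have hp : ‖p‖ * ‖y₀‖ ≤ (1 - ‖q‖) * ‖y₀‖ :=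
    mul_le_mul_of_nonneg_right (by linarith) (norm_nonneg y₀)
  have hscaled : (1 - ‖q‖) * ‖y₁‖ < (1 - ‖q‖) * ‖y₀‖ := by linarith
  exact lt_of_mul_lt_mul_left hscaled (by linarith [norm_nonneg p])

end NormedRing

namespace Matrix

variable {ι K : Type*} [Fintype ι] [DecidableEq ι] [CommRing K]

theorem eq_neg_inv_mul_of_eq_neg_inv_mul {a c y₀ y₁ : Matrix ι ι K} (ha : IsUnit a)
    (hc : IsUnit c) (h : y₀ = -(c⁻¹ * a * y₁)) : y₁ = -(a⁻¹ * c * y₀) := by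
  have hcy : c * y₀ = -(a * y₁) := by
    rw [h, mul_neg, mul_assoc, mul_nonsing_inv_cancel_left _ _ ((isUnit_iff_isUnit_det c).1 hc)]
  rw [mul_assoc, hcy, mul_neg, neg_neg,
    nonsing_inv_mul_cancel_left _ _ ((isUnit_iff_isUnit_det a).1 ha)]

theorem eq_neg_inv_mul_add_of_eq_neg_inv_mul_add {a b c y₀ y₁ y₂ : Matrix ι ι K}
    (ha : IsUnit a) (hc : IsUnit c) (h : y₀ = -(c⁻¹ * (a * y₁ + b * y₂))) :
    y₁ = -(a⁻¹ * c * y₀ + a⁻¹ * b * y₂) := by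
  have hay : a * y₁ = -(c * y₀) - b * y₂ := by
    rw [h, mul_neg, mul_nonsing_inv_cancel_left _ _ ((isUnit_iff_isUnit_det c).1 hc), neg_neg,
      add_sub_cancel_right]
  calc y₁ = a⁻¹ * (a * y₁) :=
        (nonsing_inv_mul_cancel_left _ _ ((isUnit_iff_isUnit_det a).1 ha)).symm
    _ = -(a⁻¹ * c * y₀ + a⁻¹ * b * y₂) := by rw [hay]; noncomm_ring

theorem inv_mul_ne_zero [Nontrivial K] [Nonempty ι] {a b : Matrix ι ι K} (ha : IsUnit a)
    (hb : IsUnit b) : a⁻¹ * b ≠ 0 :=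
  (isUnit_nonsing_inv_iff.2 ha |>.mul hb).ne_zero

end Matrix

theorem norm_Y_strict_anti_general
    (n m : ℕ) (hm : 1 ≤ m)
    (A B C : ℕ → Matrix (Fin m) (Fin m) ℂ)
    (hB : ∀ i, 1 ≤ i → i ≤ n - 1 → IsUnit (B i))
    (hC : ∀ i, 1 ≤ i → i ≤ n - 1 → IsUnit (C i))
    (hAi : ∀ i, 1 ≤ i → i ≤ n → IsUnit (A i))
    (hdom : ∀ i, 1 ≤ i → i ≤ n → ‖(A i)⁻¹ * C (i - 1)‖ + ‖(A i)⁻¹ * B i‖ ≤ 1)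
    (hCn : ‖(A n)⁻¹ * C (n - 1)‖ < 1)
    (X : ℕ → Matrix (Fin m) (Fin m) ℂ)
    (hYunit : IsUnit (X n * A n + X (n - 1) * B (n - 1)))
    (Y : ℕ → Matrix (Fin m) (Fin m) ℂ)
    (hYn : Y n = (X n * A n + X (n - 1) * B (n - 1))⁻¹)
    (hYn1 : Y (n - 1) = -((C (n - 1))⁻¹ * A n * Y n))
    (hY : ∀ i, 1 ≤ i → i ≤ n - 2 →
      Y i = -((C i)⁻¹ * (A (i + 1) * Y (i + 1) + B (i + 1) * Y (i + 2)))) :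
    ∀ i, 1 ≤ i → i ≤ n - 1 → ‖Y (i + 1)‖ < ‖Y i‖ := by
  have : Nonempty (Fin m) := ⟨⟨0, hm⟩⟩
  intro i hi hin
  refine Nat.decreasingInduction' (P := fun k => ‖Y (k + 1)‖ < ‖Y k‖) ?_ hin ?_
  · intro k hkn hik ih
    have hAk : IsUnit (A (k + 1)) := hAi (k + 1) (by omega) (by omega)
    have hYk := Matrix.eq_neg_inv_mul_add_of_eq_neg_inv_mul_add hAk
      (hC k (by omega) (by omega)) (hY k (by omega) (by omega))
    exact norm_lt_of_eq_neg_mul_add_mul hYk (by simpa only [Nat.add_sub_cancel] using hdom (k + 1) (by omega) (by omega))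
      (Matrix.inv_mul_ne_zero hAk (hB (k + 1) (by omega) (by omega))) ih
  · have hYn_ne : Y n ≠ 0 := by
      rw [hYn]
      exact (Matrix.isUnit_nonsing_inv_iff.2 hYunit).ne_zero
    rw [Nat.sub_add_cancel (by omega)]
    exact norm_lt_of_eq_neg_mul
      (Matrix.eq_neg_inv_mul_of_eq_neg_inv_mul (hAi n (by omega) le_rfl)
        (hC (n - 1) (by omega) le_rfl) hYn1) hCn hYn_ne

theorem norm_Y_strict_anti
    (n m : ℕ) (hn : 2 ≤ n) (hm : 1 ≤ m)
    (A B C : ℕ → Matrix (Fin m) (Fin m) ℂ)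
    (hC0 : C 0 = 0) (hBn : B n = 0)
    (hAinv : IsUnit (blockTridiag n m A B C))
    (hB : ∀ i, 1 ≤ i → i ≤ n - 1 → IsUnit (B i))
    (hC : ∀ i, 1 ≤ i → i ≤ n - 1 → IsUnit (C i))
    (hAi : ∀ i, 1 ≤ i → i ≤ n → IsUnit (A i))
    (hdom : ∀ i, 1 ≤ i → i ≤ n → ‖(A i)⁻¹ * C (i - 1)‖ + ‖(A i)⁻¹ * B i‖ ≤ 1)
    (hB1 : ‖(A 1)⁻¹ * B 1‖ < 1)
    (hCn : ‖(A n)⁻¹ * C (n - 1)‖ < 1)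
    (X : ℕ → Matrix (Fin m) (Fin m) ℂ)
    (hX1 : X 1 = 1) (hX2 : X 2 = -(A 1 * (C 1)⁻¹))
    (hX : ∀ i, 3 ≤ i → i ≤ n →
      X i = -((X (i - 2) * B (i - 2) + X (i - 1) * A (i - 1)) * (C (i - 1))⁻¹))
    (hYunit : IsUnit (X n * A n + X (n - 1) * B (n - 1)))
    (Y : ℕ → Matrix (Fin m) (Fin m) ℂ)
    (hYn : Y n = (X n * A n + X (n - 1) * B (n - 1))⁻¹)
    (hYn1 : Y (n - 1) = -((C (n - 1))⁻¹ * A n * Y n))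
    (hY : ∀ i, 1 ≤ i → i ≤ n - 2 →
      Y i = -((C i)⁻¹ * (A (i + 1) * Y (i + 1) + B (i + 1) * Y (i + 2)))) :
    ∀ i, 1 ≤ i → i ≤ n - 1 → ‖Y (i + 1)‖ < ‖Y i‖ :=
  norm_Y_strict_anti_general n m hm A B C hB hC hAi hdom hCn X hYunit Y hYn hYn1 hY
end

section
/- Under the standing assumptions, the recursively defined matrices L_1 = T_1 = A_1⁻¹B_1, T_i = I − A_i⁻¹C_{i−1}L_{i−1} and L_i = T_i⁻¹A_i⁻¹B_i (for i = 2,…,n−1) are all invertible (in particular each T_i is invertible, so the recursion is well defined), and ‖L_i‖ ≤ τ_i for i = 1,…,n−1. -/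
open scoped Matrix
attribute [local instance] Matrix.linftyOpNormedRing

/-!
Write `bᵢ = Aᵢ⁻¹Bᵢ` and `cᵢ = Aᵢ⁻¹Cᵢ₋₁`, so that `Lᵢ = (1 - cᵢLᵢ₋₁)⁻¹bᵢ`. Since `Bᵢ` is invertible,
`bᵢ ≠ 0`, and row dominance `‖cᵢ‖ + ‖bᵢ‖ ≤ 1` forces `‖cᵢ‖ < 1` and `τᵢ = ‖bᵢ‖ / (1 - ‖cᵢ‖) ≤ 1`.
By induction `‖Lᵢ₋₁‖ ≤ τᵢ₋₁ ≤ 1`, hence `‖cᵢLᵢ₋₁‖ ≤ ‖cᵢ‖ < 1`, so `Tᵢ = 1 - cᵢLᵢ₋₁` is invertible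
by the Neumann series, with `‖Tᵢ⁻¹‖ ≤ (1 - ‖cᵢ‖)⁻¹`, which gives `‖Lᵢ‖ ≤ τᵢ`.
-/

open scoped Ring

attribute [local instance] Matrix.linftyOpNormedAlgebra

theorem div_one_sub_le_one {x y : ℝ} (h : x + y ≤ 1) (hx : x < 1) : y / (1 - x) ≤ 1 :=
  div_le_one_of_le₀ (by linarith) (by linarith)

section NormedRing

variable {R : Type*} [NormedRing R]

theorem norm_mul_le_left_of_norm_le_one (c : R) {l : R} (hl : ‖l‖ ≤ 1) : ‖c * l‖ ≤ ‖c‖ :=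
  (norm_mul_le c l).trans (mul_le_of_le_one_right (norm_nonneg c) hl)

variable [NormOneClass R] [HasSummableGeomSeries R]

theorem norm_ringInverse_one_sub_le {x : R} (h : ‖x‖ < 1) : ‖(1 - x)⁻¹ʳ‖ ≤ (1 - ‖x‖)⁻¹ := by
  simpa [← geom_series_eq_inverse x h] using tsum_geometric_le_of_norm_lt_one x h

theorem norm_ringInverse_one_sub_mul_mul_le {c l : R} (b : R) (hc : ‖c‖ < 1) (hl : ‖l‖ ≤ 1) :
    ‖(1 - c * l)⁻¹ʳ * b‖ ≤ ‖b‖ / (1 - ‖c‖) := by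
  have hcl := norm_mul_le_left_of_norm_le_one c hl
  calc ‖(1 - c * l)⁻¹ʳ * b‖ ≤ ‖(1 - c * l)⁻¹ʳ‖ * ‖b‖ := norm_mul_le _ _
    _ ≤ (1 - ‖c * l‖)⁻¹ * ‖b‖ := by
      gcongr
      exact norm_ringInverse_one_sub_le (hcl.trans_lt hc)
    _ ≤ (1 - ‖c‖)⁻¹ * ‖b‖ := by
      gcongr
    _ = ‖b‖ / (1 - ‖c‖) := inv_mul_eq_div _ _

theorem norm_le_of_ringInverse_recursion {N : ℕ} {b c L : ℕ → R}
    (hdom : ∀ i, 1 ≤ i → i ≤ N → ‖c i‖ + ‖b i‖ ≤ 1) (hc : ∀ i, 1 ≤ i → i ≤ N → ‖c i‖ < 1)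
    (hL1 : L 1 = b 1) (hL : ∀ i, 2 ≤ i → i ≤ N → L i = (1 - c i * L (i - 1))⁻¹ʳ * b i) :
    ∀ i, 1 ≤ i → i ≤ N → ‖L i‖ ≤ ‖b i‖ / (1 - ‖c i‖) := by
  intro i hi
  induction i, hi using Nat.le_induction with
  | base =>
    intro hN
    rw [hL1]
    have := hc 1 le_rfl hN
    exact le_div_self (norm_nonneg _) (by linarith) (by linarith [norm_nonneg (c 1)])
  | succ i hi ih =>
    intro hN
    have hLi : ‖L i‖ ≤ 1 :=
      (ih (by omega)).trans (div_one_sub_le_one (hdom i hi (by omega)) (hc i hi (by omega)))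
    rw [hL (i + 1) (by omega) hN, Nat.add_sub_cancel]
    exact norm_ringInverse_one_sub_mul_mul_le _ (hc (i + 1) (by omega) hN) hLi

end NormedRing

theorem L_T_invertible_and_norm_le_tau_general
    (n m : ℕ) (hm : 1 ≤ m)
    (A B C : ℕ → Matrix (Fin m) (Fin m) ℂ)
    (hB : ∀ i, 1 ≤ i → i ≤ n - 1 → IsUnit (B i))
    (hAi : ∀ i, 1 ≤ i → i ≤ n → IsUnit (A i))
    (hdom : ∀ i, 1 ≤ i → i ≤ n → ‖(A i)⁻¹ * C (i - 1)‖ + ‖(A i)⁻¹ * B i‖ ≤ 1)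
    (τ : ℕ → ℝ)
    (hτ : ∀ i, 1 ≤ i → i ≤ n → τ i = ‖(A i)⁻¹ * B i‖ / (1 - ‖(A i)⁻¹ * C (i - 1)‖))
    (L T : ℕ → Matrix (Fin m) (Fin m) ℂ)
    (hL1 : L 1 = (A 1)⁻¹ * B 1) (hT1 : T 1 = (A 1)⁻¹ * B 1)
    (hT : ∀ i, 2 ≤ i → i ≤ n - 1 → T i = 1 - (A i)⁻¹ * C (i - 1) * L (i - 1))
    (hL : ∀ i, 2 ≤ i → i ≤ n - 1 → L i = (T i)⁻¹ * ((A i)⁻¹ * B i)) :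
    (∀ i, 1 ≤ i → i ≤ n - 1 → IsUnit (T i) ∧ IsUnit (L i)) ∧
    (∀ i, 1 ≤ i → i ≤ n - 1 → ‖L i‖ ≤ τ i) := by
  have : Nonempty (Fin m) := ⟨⟨0, hm⟩⟩
  set b : ℕ → Matrix (Fin m) (Fin m) ℂ := fun i => (A i)⁻¹ * B i
  set c : ℕ → Matrix (Fin m) (Fin m) ℂ := fun i => (A i)⁻¹ * C (i - 1)
  have hb : ∀ i, 1 ≤ i → i ≤ n - 1 → IsUnit (b i) := fun i h1 h2 =>
    (Matrix.isUnit_nonsing_inv_iff.2 (hAi i h1 (by omega))).mul (hB i h1 h2)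
  have hc : ∀ i, 1 ≤ i → i ≤ n - 1 → ‖c i‖ < 1 := fun i h1 h2 => by
    linarith [hdom i h1 (by omega), norm_pos_iff.2 (hb i h1 h2).ne_zero]
  have hnorm : ∀ i, 1 ≤ i → i ≤ n - 1 → ‖L i‖ ≤ ‖b i‖ / (1 - ‖c i‖) :=
    norm_le_of_ringInverse_recursion (fun i h1 _ => hdom i h1 (by omega)) hc hL1
      fun i h1 h2 => by rw [hL i h1 h2, hT i h1 h2, Matrix.nonsing_inv_eq_ringInverse]
  have hL_le_one : ∀ i, 1 ≤ i → i ≤ n - 1 → ‖L i‖ ≤ 1 := fun i h1 h2 =>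
    (hnorm i h1 h2).trans (div_one_sub_le_one (hdom i h1 (by omega)) (hc i h1 h2))
  refine ⟨fun i h1 h2 => ?_, fun i h1 h2 => (hnorm i h1 h2).trans_eq (hτ i h1 (by omega)).symm⟩
  obtain rfl | h1 := h1.eq_or_lt
  · rw [hT1, hL1]
    exact ⟨hb 1 le_rfl h2, hb 1 le_rfl h2⟩
  have hTi : IsUnit (T i) := by
    rw [hT i h1 h2]
    exact isUnit_one_sub_of_norm_lt_one <|
      (norm_mul_le_left_of_norm_le_one _ (hL_le_one (i - 1) (by omega) (by omega))).trans_lt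
        (hc i (by omega) h2)
  exact ⟨hTi, hL i h1 h2 ▸ (Matrix.isUnit_nonsing_inv_iff.2 hTi).mul (hb i (by omega) h2)⟩

theorem L_T_invertible_and_norm_le_tau
    (n m : ℕ) (hn : 2 ≤ n) (hm : 1 ≤ m)
    (A B C : ℕ → Matrix (Fin m) (Fin m) ℂ)
    (hC0 : C 0 = 0) (hBn : B n = 0)
    (hAinv : IsUnit (blockTridiag n m A B C))
    (hB : ∀ i, 1 ≤ i → i ≤ n - 1 → IsUnit (B i))
    (hC : ∀ i, 1 ≤ i → i ≤ n - 1 → IsUnit (C i))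
    (hAi : ∀ i, 1 ≤ i → i ≤ n → IsUnit (A i))
    (hdom : ∀ i, 1 ≤ i → i ≤ n → ‖(A i)⁻¹ * C (i - 1)‖ + ‖(A i)⁻¹ * B i‖ ≤ 1)
    (hB1 : ‖(A 1)⁻¹ * B 1‖ < 1)
    (hCn : ‖(A n)⁻¹ * C (n - 1)‖ < 1)
    (τ : ℕ → ℝ)
    (hτ : ∀ i, 1 ≤ i → i ≤ n → τ i = ‖(A i)⁻¹ * B i‖ / (1 - ‖(A i)⁻¹ * C (i - 1)‖))
    (L T : ℕ → Matrix (Fin m) (Fin m) ℂ)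
    (hL1 : L 1 = (A 1)⁻¹ * B 1) (hT1 : T 1 = (A 1)⁻¹ * B 1)
    (hT : ∀ i, 2 ≤ i → i ≤ n - 1 → T i = 1 - (A i)⁻¹ * C (i - 1) * L (i - 1))
    (hL : ∀ i, 2 ≤ i → i ≤ n - 1 → L i = (T i)⁻¹ * ((A i)⁻¹ * B i)) :
    (∀ i, 1 ≤ i → i ≤ n - 1 → IsUnit (T i) ∧ IsUnit (L i)) ∧
    (∀ i, 1 ≤ i → i ≤ n - 1 → ‖L i‖ ≤ τ i) :=
  L_T_invertible_and_norm_le_tau_general n m hm A B C hB hAi hdom τ hτ L T hL1 hT1 hT hL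
end

section
/- Under the standing assumptions, the matrices U_i satisfy U_i = −L_iU_{i+1} for i = 1,…,n−1, where L_i are the matrices defined by the recursion L_1 = T_1 = A_1⁻¹B_1, T_i = I − A_i⁻¹C_{i−1}L_{i−1}, L_i = T_i⁻¹A_i⁻¹B_i for i = 2,…,n−1. -/
open scoped Matrix
attribute [local instance] Matrix.linftyOpNormedRing

/-!
Row block diagonal dominance keeps every `L i` in the open unit ball: with
`X = A i⁻¹ * C (i - 1)`, the identity `T i * L i = A i⁻¹ * B i` gives
`‖L i‖ * (1 - ‖X‖ * ‖L (i - 1)‖) ≤ 1 - ‖X‖`, and as `X ≠ 0` this forces `‖L i‖ < 1` whenever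
`‖L (i - 1)‖ < 1`. Then `T i = 1 - X * L (i - 1)` is invertible by the Neumann series, and
substituting `U (i - 1) = -(L (i - 1) * U i)` into the three-term recurrence turns
`C (i - 1) * U (i - 1) + A i * U i` into `A i * T i * U i`, whence `U i = -(L i * U (i + 1))`.
-/

theorem isUnit_one_sub_mul_of_norm_le_one {R : Type*} [NormedRing R] [HasSummableGeomSeries R]
    {x l : R} (hx : ‖x‖ ≤ 1) (hl : ‖l‖ < 1) : IsUnit (1 - x * l) :=
  isUnit_one_sub_of_norm_lt_one <| (norm_mul_le x l).trans_lt <|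
    mul_lt_one_of_nonneg_of_lt_one_right hx (norm_nonneg l) hl

theorem norm_lt_one_of_one_sub_mul_mul_eq {R : Type*} [SeminormedRing R] {x b l l' : R}
    (hdom : ‖x‖ + ‖b‖ ≤ 1) (hx : 0 < ‖x‖) (hl : ‖l‖ < 1) (h : (1 - x * l) * l' = b) :
    ‖l'‖ < 1 := by
  have hl' : l' = b + x * l * l' := by rw [← h]; noncomm_ring
  have hbound : ‖l'‖ ≤ ‖b‖ + ‖x‖ * ‖l‖ * ‖l'‖ :=
    calc ‖l'‖ = ‖b + x * l * l'‖ := by rw [← hl']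
      _ ≤ ‖b‖ + ‖x * l * l'‖ := norm_add_le _ _
      _ ≤ ‖b‖ + ‖x‖ * ‖l‖ * ‖l'‖ := by gcongr; exact norm_mul₃_le
  by_contra! hge
  nlinarith [norm_nonneg b, norm_nonneg l, mul_pos hx (sub_pos.2 hl)]

namespace Matrix

variable {ι K : Type*} [Fintype ι] [DecidableEq ι] [CommRing K]

theorem eq_neg_mul_of_three_term_recurrence {a b c t l l' u₀ u₁ u₂ : Matrix ι ι K}
    (ha : IsUnit a.det) (hb : IsUnit b.det) (ht : IsUnit t.det)
    (htl : t = 1 - a⁻¹ * c * l) (hl' : l' = t⁻¹ * (a⁻¹ * b))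
    (hu₀ : u₀ = -(l * u₁)) (hu₂ : u₂ = -(b⁻¹ * (c * u₀ + a * u₁))) :
    u₁ = -(l' * u₂) := by
  have hat : a * t = a - c * l := by
    rw [htl, mul_sub, mul_one, ← Matrix.mul_assoc, ← Matrix.mul_assoc, mul_nonsing_inv _ ha,
      Matrix.one_mul]
  have hsum : c * u₀ + a * u₁ = a * t * u₁ := by
    rw [hu₀, hat, sub_mul, Matrix.mul_assoc c, mul_neg]
    abel
  rw [hu₂, hsum, hl', mul_neg, neg_neg]
  simp only [Matrix.mul_assoc]
  rw [mul_nonsing_inv_cancel_left _ _ hb, nonsing_inv_mul_cancel_left _ _ ha,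
    nonsing_inv_mul_cancel_left _ _ ht]

end Matrix

theorem U_recurrence_via_L_general
    (n m : ℕ) (hm : 1 ≤ m)
    (A B C : ℕ → Matrix (Fin m) (Fin m) ℂ)
    (hB : ∀ i, 1 ≤ i → i ≤ n - 1 → IsUnit (B i))
    (hC : ∀ i, 1 ≤ i → i ≤ n - 1 → IsUnit (C i))
    (hAi : ∀ i, 1 ≤ i → i ≤ n → IsUnit (A i))
    (hdom : ∀ i, 1 ≤ i → i ≤ n → ‖(A i)⁻¹ * C (i - 1)‖ + ‖(A i)⁻¹ * B i‖ ≤ 1)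
    (hB1 : ‖(A 1)⁻¹ * B 1‖ < 1)
    (U : ℕ → Matrix (Fin m) (Fin m) ℂ)
    (hU1 : U 1 = 1) (hU2 : U 2 = -((B 1)⁻¹ * A 1))
    (hU : ∀ i, 3 ≤ i → i ≤ n →
      U i = -((B (i - 1))⁻¹ * (C (i - 2) * U (i - 2) + A (i - 1) * U (i - 1))))
    (L T : ℕ → Matrix (Fin m) (Fin m) ℂ)
    (hL1 : L 1 = (A 1)⁻¹ * B 1)
    (hT : ∀ i, 2 ≤ i → i ≤ n - 1 → T i = 1 - (A i)⁻¹ * C (i - 1) * L (i - 1))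
    (hL : ∀ i, 2 ≤ i → i ≤ n - 1 → L i = (T i)⁻¹ * ((A i)⁻¹ * B i)) :
    ∀ i, 1 ≤ i → i ≤ n - 1 → U i = -(L i * U (i + 1)) := by
  have : Nonempty (Fin m) := ⟨⟨0, hm⟩⟩
  -- completeness of the `L∞` operator norm is found through its normed-algebra structure
  have : HasSummableGeomSeries (Matrix (Fin m) (Fin m) ℂ) := by
    let := (Matrix.linftyOpNormedAlgebra : NormedAlgebra ℂ (Matrix (Fin m) (Fin m) ℂ))
    infer_instance
  have hdet (M : Matrix (Fin m) (Fin m) ℂ) : IsUnit M → IsUnit M.det :=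
    (Matrix.isUnit_iff_isUnit_det M).1
  suffices key : ∀ i, 1 ≤ i → i ≤ n - 1 → ‖L i‖ < 1 ∧ U i = -(L i * U (i + 1)) from
    fun i hi hin => (key i hi hin).2
  intro i hi
  induction i, hi using Nat.le_induction with
  | base =>
    intro hn
    refine ⟨hL1 ▸ hB1, ?_⟩
    rw [hU1, hU2, hL1, mul_neg, neg_neg, Matrix.mul_assoc,
      Matrix.mul_nonsing_inv_cancel_left _ _ (hdet _ (hB 1 le_rfl hn)),
      Matrix.nonsing_inv_mul _ (hdet _ (hAi 1 le_rfl (by omega)))]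
  | succ i hi ih =>
    intro hin
    obtain ⟨hLnorm, hUrec⟩ := ih (by omega)
    have hA := hAi (i + 1) (by omega) (by omega)
    have hdomi : ‖(A (i + 1))⁻¹ * C i‖ + ‖(A (i + 1))⁻¹ * B (i + 1)‖ ≤ 1 := by
      simpa using hdom (i + 1) (by omega) (by omega)
    have hTnext : T (i + 1) = 1 - (A (i + 1))⁻¹ * C i * L i := by
      simpa using hT (i + 1) (by omega) hin
    have hTu : IsUnit (T (i + 1)) := hTnext ▸ isUnit_one_sub_mul_of_norm_le_one
      ((le_add_of_nonneg_right (norm_nonneg _)).trans hdomi) hLnorm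
    have hLnext := hL (i + 1) (by omega) hin
    have hUnext := hU (i + 2) (by omega) (by omega)
    rw [show i + 2 - 1 = i + 1 by omega, show i + 2 - 2 = i by omega] at hUnext
    refine ⟨norm_lt_one_of_one_sub_mul_mul_eq hdomi ?_ hLnorm ?_,
      Matrix.eq_neg_mul_of_three_term_recurrence (hdet _ hA) (hdet _ (hB (i + 1) (by omega) hin))
        (hdet _ hTu) hTnext hLnext hUrec hUnext⟩
    · exact norm_pos_iff.2 ((Matrix.isUnit_nonsing_inv_iff.2 hA).mul (hC i hi (by omega))).ne_zero
    · rw [← hTnext, hLnext, Matrix.mul_nonsing_inv_cancel_left _ _ (hdet _ hTu)]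

theorem U_recurrence_via_L
    (n m : ℕ) (hn : 2 ≤ n) (hm : 1 ≤ m)
    (A B C : ℕ → Matrix (Fin m) (Fin m) ℂ)
    (hC0 : C 0 = 0) (hBn : B n = 0)
    (hAinv : IsUnit (blockTridiag n m A B C))
    (hB : ∀ i, 1 ≤ i → i ≤ n - 1 → IsUnit (B i))
    (hC : ∀ i, 1 ≤ i → i ≤ n - 1 → IsUnit (C i))
    (hAi : ∀ i, 1 ≤ i → i ≤ n → IsUnit (A i))
    (hdom : ∀ i, 1 ≤ i → i ≤ n → ‖(A i)⁻¹ * C (i - 1)‖ + ‖(A i)⁻¹ * B i‖ ≤ 1)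
    (hB1 : ‖(A 1)⁻¹ * B 1‖ < 1)
    (hCn : ‖(A n)⁻¹ * C (n - 1)‖ < 1)
    (U : ℕ → Matrix (Fin m) (Fin m) ℂ)
    (hU1 : U 1 = 1) (hU2 : U 2 = -((B 1)⁻¹ * A 1))
    (hU : ∀ i, 3 ≤ i → i ≤ n →
      U i = -((B (i - 1))⁻¹ * (C (i - 2) * U (i - 2) + A (i - 1) * U (i - 1))))
    (L T : ℕ → Matrix (Fin m) (Fin m) ℂ)
    (hL1 : L 1 = (A 1)⁻¹ * B 1) (hT1 : T 1 = (A 1)⁻¹ * B 1)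
    (hT : ∀ i, 2 ≤ i → i ≤ n - 1 → T i = 1 - (A i)⁻¹ * C (i - 1) * L (i - 1))
    (hL : ∀ i, 2 ≤ i → i ≤ n - 1 → L i = (T i)⁻¹ * ((A i)⁻¹ * B i)) :
    ∀ i, 1 ≤ i → i ≤ n - 1 → U i = -(L i * U (i + 1)) :=
  U_recurrence_via_L_general n m hm A B C hB hC hAi hdom hB1 U hU1 hU2 hU L T hL1 hT hL
end

section
/- Under the standing assumptions, and assuming X_nA_n + X_{n−1}B_{n−1} is invertible so that the Y_i are defined, the matrices Y_i satisfy Y_i = −M_iY_{i−1} for i = 2,…,n, where M_i are the matrices defined by the recursion M_n = W_n = A_n⁻¹C_{n−1}, W_i = I − A_i⁻¹B_iM_{i+1}, M_i = W_i⁻¹A_i⁻¹C_{i−1} for i = n−1,…,2. -/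
open scoped Matrix
attribute [local instance] Matrix.linftyOpNormedRing

/-! Downward induction on `i`. Since `W_i M_i = A_i⁻¹ C_{i-1}`, the matrix `M_i` solves
`M_i = A_i⁻¹ C_{i-1} + A_i⁻¹ B_i M_{i+1} M_i`; together with `‖M_{i+1}‖ < 1` and row diagonal
dominance this forces `‖M_i‖ < 1`, and it makes `W_i = 1 - A_i⁻¹ B_i M_{i+1}` a Neumann-series
unit. Substituting `Y_{i+1} = -M_{i+1} Y_i` into the recurrence defining `Y_{i-1}` gives
`C_{i-1} Y_{i-1} = -A_i W_i Y_i`, that is `Y_i = -M_i Y_{i-1}`. -/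

section NormedRing

variable {R : Type*} [NormedRing R]

theorem isUnit_one_sub_mul_of_norm_le_one_of_norm_lt_one [HasSummableGeomSeries R] {b x : R}
    (hb : ‖b‖ ≤ 1) (hx : ‖x‖ < 1) : IsUnit (1 - b * x) :=
  isUnit_one_sub_of_norm_lt_one <| calc
    ‖b * x‖ ≤ ‖b‖ * ‖x‖ := norm_mul_le b x
    _ ≤ ‖x‖ := mul_le_of_le_one_left (norm_nonneg x) hb
    _ < 1 := hx

theorem norm_lt_one_of_one_sub_mul_mul_eq_s6 {b c x y : R} (hbc : ‖c‖ + ‖b‖ ≤ 1) (hb : b ≠ 0)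
    (hx : ‖x‖ < 1) (hy : (1 - b * x) * y = c) : ‖y‖ < 1 := by
  have hy' : y = c + b * x * y := by rw [← hy]; noncomm_ring
  have hle : ‖y‖ ≤ ‖c‖ + ‖b‖ * ‖x‖ * ‖y‖ := calc
    ‖y‖ = ‖c + b * x * y‖ := by rw [← hy']
    _ ≤ ‖c‖ + ‖b * x * y‖ := norm_add_le _ _
    _ ≤ ‖c‖ + ‖b‖ * ‖x‖ * ‖y‖ := by
      gcongr; exact (norm_mul_le _ _).trans (by gcongr; exact norm_mul_le _ _)
  have hb' : 0 < ‖b‖ := norm_pos_iff.mpr hb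
  by_contra! hy1
  nlinarith [mul_nonneg (sub_nonneg.mpr hy1) (norm_nonneg c), mul_pos hb' (sub_pos.mpr hx)]

end NormedRing

namespace Matrix

variable {ι 𝕜 : Type*} [Fintype ι] [DecidableEq ι]

theorem eq_neg_inv_mul_mul_of_eq_neg_inv_mul_mul [CommRing 𝕜] {a c y₀ y₁ : Matrix ι ι 𝕜}
    (ha : IsUnit a) (hc : IsUnit c) (hy : y₀ = -(c⁻¹ * a * y₁)) : y₁ = -(a⁻¹ * c * y₀) := by
  rw [isUnit_iff_isUnit_det] at ha hc
  rw [hy, mul_neg, neg_neg, mul_assoc, mul_assoc, mul_nonsing_inv_cancel_left _ _ hc,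
    nonsing_inv_mul_cancel_left _ _ ha]

theorem eq_neg_mul_of_three_term_recurrence_s6 [CommRing 𝕜] {a b c w x y₀ y₁ y₂ : Matrix ι ι 𝕜}
    (ha : IsUnit a) (hc : IsUnit c) (hw : IsUnit w)
    (hy₀ : y₀ = -(c⁻¹ * (a * y₁ + b * y₂))) (hy₂ : y₂ = -(x * y₁)) (hwx : w = 1 - a⁻¹ * b * x) :
    y₁ = -(w⁻¹ * (a⁻¹ * c) * y₀) := by
  rw [isUnit_iff_isUnit_det] at ha hc hw
  have hcy : c * y₀ = -(a * (w * y₁)) := by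
    rw [hy₀, mul_neg, mul_nonsing_inv_cancel_left _ _ hc, hy₂, hwx]
    simp only [sub_mul, mul_sub, one_mul, ← mul_assoc, mul_nonsing_inv _ ha, mul_neg]
    noncomm_ring
  rw [mul_assoc, mul_assoc, hcy, mul_neg, nonsing_inv_mul_cancel_left _ _ ha,
    mul_neg, nonsing_inv_mul_cancel_left _ _ hw, neg_neg]

theorem isUnit_and_norm_lt_one_of_diagonally_dominant [NormedField 𝕜] [CompleteSpace 𝕜]
    [Nonempty ι] {a b c w x y : Matrix ι ι 𝕜} (ha : IsUnit a) (hb : IsUnit b)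
    (hdom : ‖a⁻¹ * c‖ + ‖a⁻¹ * b‖ ≤ 1) (hx : ‖x‖ < 1) (hwx : w = 1 - a⁻¹ * b * x)
    (hy : y = w⁻¹ * (a⁻¹ * c)) : IsUnit w ∧ ‖y‖ < 1 := by
  -- The product uniformity on matrices agrees with that of the `L∞` operator norm only up to
  -- unfolding, so instance search does not see the completeness of this normed ring.
  have : HasSummableGeomSeries (Matrix ι ι 𝕜) :=
    @instHasSummableGeomSeriesOfCompleteSpace _ _ (Matrix.instCompleteSpace ι ι 𝕜)
  have hab : IsUnit (a⁻¹ * b) := (isUnit_nonsing_inv_iff.mpr ha).mul hb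
  have hw : IsUnit w := hwx ▸ isUnit_one_sub_mul_of_norm_le_one_of_norm_lt_one
    ((le_add_of_nonneg_left (norm_nonneg _)).trans hdom) hx
  refine ⟨hw, norm_lt_one_of_one_sub_mul_mul_eq_s6 hdom hab.ne_zero hx ?_⟩
  rw [← hwx, hy, mul_nonsing_inv_cancel_left _ _ ((isUnit_iff_isUnit_det w).mp hw)]

end Matrix

theorem Y_recurrence_via_M_general
    (n m : ℕ) (hm : 1 ≤ m)
    (A B C : ℕ → Matrix (Fin m) (Fin m) ℂ)
    (hB : ∀ i, 1 ≤ i → i ≤ n - 1 → IsUnit (B i))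
    (hC : ∀ i, 1 ≤ i → i ≤ n - 1 → IsUnit (C i))
    (hAi : ∀ i, 1 ≤ i → i ≤ n → IsUnit (A i))
    (hdom : ∀ i, 1 ≤ i → i ≤ n → ‖(A i)⁻¹ * C (i - 1)‖ + ‖(A i)⁻¹ * B i‖ ≤ 1)
    (hCn : ‖(A n)⁻¹ * C (n - 1)‖ < 1)
    (Y : ℕ → Matrix (Fin m) (Fin m) ℂ)
    (hYn1 : Y (n - 1) = -((C (n - 1))⁻¹ * A n * Y n))
    (hY : ∀ i, 1 ≤ i → i ≤ n - 2 →
      Y i = -((C i)⁻¹ * (A (i + 1) * Y (i + 1) + B (i + 1) * Y (i + 2))))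
    (M W : ℕ → Matrix (Fin m) (Fin m) ℂ)
    (hMn : M n = (A n)⁻¹ * C (n - 1))
    (hW : ∀ i, 2 ≤ i → i ≤ n - 1 → W i = 1 - (A i)⁻¹ * B i * M (i + 1))
    (hM : ∀ i, 2 ≤ i → i ≤ n - 1 → M i = (W i)⁻¹ * ((A i)⁻¹ * C (i - 1))) :
    ∀ i, 2 ≤ i → i ≤ n → Y i = -(M i * Y (i - 1)) := by
  have : Nonempty (Fin m) := ⟨⟨0, hm⟩⟩
  intro i hi hin
  refine (Nat.decreasingInduction' (P := fun k => ‖M k‖ < 1 ∧ Y k = -(M k * Y (k - 1)))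
    ?_ hin ?_).2
  · intro k hkn hik ⟨hMsucc, hYsucc⟩
    obtain ⟨j, rfl⟩ : ∃ j, k = j + 2 := ⟨k - 2, by omega⟩
    obtain ⟨hWk, hMk⟩ := Matrix.isUnit_and_norm_lt_one_of_diagonally_dominant
      (hAi _ (by omega) hkn.le) (hB _ (by omega) (by omega)) (hdom _ (by omega) hkn.le) hMsucc
      (hW _ (by omega) (by omega)) (hM _ (by omega) (by omega))
    refine ⟨hMk, ?_⟩
    rw [hM _ (by omega) (by omega)]
    exact Matrix.eq_neg_mul_of_three_term_recurrence_s6 (hAi _ (by omega) hkn.le)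
      (hC _ (by omega) (by omega)) hWk (hY (j + 1) (by omega) (by omega)) hYsucc
      (hW _ (by omega) (by omega))
  · refine ⟨hMn ▸ hCn, ?_⟩
    rw [hMn]
    exact Matrix.eq_neg_inv_mul_mul_of_eq_neg_inv_mul_mul (hAi n (by omega) le_rfl)
      (hC (n - 1) (by omega) (by omega)) hYn1

theorem Y_recurrence_via_M
    (n m : ℕ) (hn : 2 ≤ n) (hm : 1 ≤ m)
    (A B C : ℕ → Matrix (Fin m) (Fin m) ℂ)
    (hC0 : C 0 = 0) (hBn : B n = 0)
    (hAinv : IsUnit (blockTridiag n m A B C))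
    (hB : ∀ i, 1 ≤ i → i ≤ n - 1 → IsUnit (B i))
    (hC : ∀ i, 1 ≤ i → i ≤ n - 1 → IsUnit (C i))
    (hAi : ∀ i, 1 ≤ i → i ≤ n → IsUnit (A i))
    (hdom : ∀ i, 1 ≤ i → i ≤ n → ‖(A i)⁻¹ * C (i - 1)‖ + ‖(A i)⁻¹ * B i‖ ≤ 1)
    (hB1 : ‖(A 1)⁻¹ * B 1‖ < 1)
    (hCn : ‖(A n)⁻¹ * C (n - 1)‖ < 1)
    (X : ℕ → Matrix (Fin m) (Fin m) ℂ)
    (hX1 : X 1 = 1) (hX2 : X 2 = -(A 1 * (C 1)⁻¹))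
    (hX : ∀ i, 3 ≤ i → i ≤ n →
      X i = -((X (i - 2) * B (i - 2) + X (i - 1) * A (i - 1)) * (C (i - 1))⁻¹))
    (hYunit : IsUnit (X n * A n + X (n - 1) * B (n - 1)))
    (Y : ℕ → Matrix (Fin m) (Fin m) ℂ)
    (hYn : Y n = (X n * A n + X (n - 1) * B (n - 1))⁻¹)
    (hYn1 : Y (n - 1) = -((C (n - 1))⁻¹ * A n * Y n))
    (hY : ∀ i, 1 ≤ i → i ≤ n - 2 →
      Y i = -((C i)⁻¹ * (A (i + 1) * Y (i + 1) + B (i + 1) * Y (i + 2))))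
    (M W : ℕ → Matrix (Fin m) (Fin m) ℂ)
    (hMn : M n = (A n)⁻¹ * C (n - 1)) (hWn : W n = (A n)⁻¹ * C (n - 1))
    (hW : ∀ i, 2 ≤ i → i ≤ n - 1 → W i = 1 - (A i)⁻¹ * B i * M (i + 1))
    (hM : ∀ i, 2 ≤ i → i ≤ n - 1 → M i = (W i)⁻¹ * ((A i)⁻¹ * C (i - 1))) :
    ∀ i, 2 ≤ i → i ≤ n → Y i = -(M i * Y (i - 1)) :=
  Y_recurrence_via_M_general n m hm A B C hB hC hAi hdom hCn Y hYn1 hY M W hMn hW hM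
end

section
/- Under the standing assumptions, the blocks Z_{ij} of the inverse A⁻¹ satisfy ‖Z_{ij}‖ ≤ ‖Z_{jj}‖ · ∏_{k=i}^{j−1} τ_k for all i < j. -/
open scoped Matrix
attribute [local instance] Matrix.linftyOpNormedRing

/-! Block matrices are read through `Matrix.comp`, under which `blockTridiag` is a tridiagonal
matrix over the ring of `m × m` blocks. Column `j` of `T * T⁻¹ = 1` then gives, for `i < j`,
`C_{i-1} Z_{i-1,j} + A_i Z_{ij} + B_i Z_{i+1,j} = 0`, hence
`‖Z_{ij}‖ ≤ c_i ‖Z_{i-1,j}‖ + b_i ‖Z_{i+1,j}‖` with `c_i = ‖A_i⁻¹ C_{i-1}‖`, `b_i = ‖A_i⁻¹ B_i‖`.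
Induction on `i`, starting from `c_1 = 0`, yields `‖Z_{ij}‖ ≤ τ_i ‖Z_{i+1,j}‖`: the previous step
gives `‖Z_{i-1,j}‖ ≤ τ_{i-1} ‖Z_{ij}‖ ≤ ‖Z_{ij}‖` because diagonal dominance forces `τ_{i-1} ≤ 1`,
and `b_i > 0` (as `B_i` is invertible) makes `1 - c_i > 0`. Telescoping these ratios gives the
product bound. -/

open Finset Matrix

/-- Row `r` of a tridiagonal matrix with 0-based rows but 1-based entries `c` and vector `z`;
`c 0 = 0` stands for the missing subdiagonal entry of row `0`. -/

theorem sum_range_tridiag_mul {R : Type*} [NonUnitalNonAssocSemiring R] (a b : R)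
    (c z : ℕ → R) (hc : c 0 = 0) {N r : ℕ} (hr : r + 1 < N) :
    ∑ t ∈ range N, (if r = t then a else if r + 1 = t then b
      else if t + 1 = r then c (t + 1) else 0) * z (t + 1) =
      c r * z r + a * z (r + 1) + b * z (r + 2) := by
  have hsplit : ∀ t, (if r = t then a else if r + 1 = t then b
      else if t + 1 = r then c (t + 1) else 0) * z (t + 1) =
      ((if t + 1 = r then c (t + 1) * z (t + 1) else 0) + (if t = r then a * z (t + 1) else 0)) +
        (if t = r + 1 then b * z (t + 1) else 0) := by
    intro t
    split_ifs <;> first | omega | simp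
  have hlower : ∑ t ∈ range N, (if t + 1 = r then c (t + 1) * z (t + 1) else 0) = c r * z r := by
    rcases r with _ | r
    · simp [hc]
    · simp only [add_left_inj, sum_ite_eq', mem_range]
      rw [if_pos (by omega)]
  simp only [hsplit, sum_add_distrib, hlower, sum_ite_eq', mem_range]
  rw [if_pos (by omega), if_pos hr]

theorem norm_le_of_add_mul_add_eq_zero {ι 𝕜 : Type*} [Fintype ι] [DecidableEq ι]
    [NormedField 𝕜] {A B C X Y W : Matrix ι ι 𝕜} (hA : IsUnit A)
    (h : C * X + A * Y + B * W = 0) :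
    ‖Y‖ ≤ ‖A⁻¹ * C‖ * ‖X‖ + ‖A⁻¹ * B‖ * ‖W‖ := by
  have hY : Y = -(A⁻¹ * C * X) - A⁻¹ * B * W := by
    have hAY : A * Y = -(C * X) - B * W := by
      rw [← sub_eq_zero, ← h]
      abel
    rw [← nonsing_inv_mul_cancel_left A Y ((isUnit_iff_isUnit_det A).mp hA), hAY, mul_sub,
      mul_neg, Matrix.mul_assoc, Matrix.mul_assoc]
  calc ‖Y‖ ≤ ‖A⁻¹ * C * X‖ + ‖A⁻¹ * B * W‖ := by
        rw [hY]; exact (norm_sub_le _ _).trans_eq (by rw [norm_neg])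
    _ ≤ ‖A⁻¹ * C‖ * ‖X‖ + ‖A⁻¹ * B‖ * ‖W‖ := add_le_add (norm_mul_le _ _) (norm_mul_le _ _)

theorem le_div_one_sub_mul {K : Type*} [Field K] [LinearOrder K] [IsStrictOrderedRing K]
    {x y w b c : K} (hb : 0 < b) (hcb : c + b ≤ 1)
    (hx : c * x ≤ c * y) (h : y ≤ c * x + b * w) : y ≤ b / (1 - c) * w := by
  rw [div_mul_eq_mul_div, le_div_iff₀ (by linarith)]
  linarith

theorem le_mul_prod_Ico_of_le_mul {R : Type*} [CommSemiring R] [PartialOrder R] [IsOrderedRing R]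
    {f τ : ℕ → R} {a b : ℕ} (hab : a ≤ b)
    (hτ : ∀ k, a ≤ k → k < b → 0 ≤ τ k) (hf : ∀ k, a ≤ k → k < b → f k ≤ τ k * f (k + 1)) :
    f a ≤ f b * ∏ k ∈ Ico a b, τ k := by
  induction b, hab using Nat.le_induction with
  | base => simp
  | succ b hab ih =>
    have ih' := ih (fun k hk hkb => hτ k hk (by omega)) (fun k hk hkb => hf k hk (by omega))
    rw [prod_Ico_succ_top hab]
    calc f a ≤ f b * ∏ k ∈ Ico a b, τ k := ih'
      _ ≤ τ b * f (b + 1) * ∏ k ∈ Ico a b, τ k :=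
        mul_le_mul_of_nonneg_right (hf b hab (by omega))
          (prod_nonneg fun k hk => hτ k (mem_Ico.mp hk).1 (by have := (mem_Ico.mp hk).2; omega))
      _ = f (b + 1) * ((∏ k ∈ Ico a b, τ k) * τ b) := by ring

theorem comp_symm_blockTridiag_apply (n m : ℕ) (A B C : ℕ → Matrix (Fin m) (Fin m) ℂ)
    (i t : Fin n) :
    (comp (Fin n) (Fin n) (Fin m) (Fin m) ℂ).symm (blockTridiag n m A B C) i t =
      if (i : ℕ) = t then A (i + 1) else if (i : ℕ) + 1 = t then B (i + 1)
      else if (t : ℕ) + 1 = i then C (t + 1) else 0 := by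
  ext k l
  simp only [comp_symm_apply, blockTridiag, of_apply, Fin.ext_iff]
  split_ifs <;> rfl

theorem blockTridiag_inv_block_row_eq_zero {n m : ℕ} {A B C : ℕ → Matrix (Fin m) (Fin m) ℂ}
    (hC0 : C 0 = 0) (hT : IsUnit (blockTridiag n m A B C))
    {Z : ℕ → ℕ → Matrix (Fin m) (Fin m) ℂ}
    (hZ : ∀ i j : Fin n, Z ((i : ℕ) + 1) ((j : ℕ) + 1) =
      Matrix.of fun k l => (blockTridiag n m A B C)⁻¹ (i, k) (j, l))
    {i j : ℕ} (hi : 1 ≤ i) (hij : i < j) (hj : j ≤ n) :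
    C (i - 1) * Z (i - 1) j + A i * Z i j + B i * Z (i + 1) j = 0 := by
  set e := (compRingEquiv (Fin n) (Fin m) ℂ).symm
  have hTT : e (blockTridiag n m A B C) * e (blockTridiag n m A B C)⁻¹ = 1 := by
    rw [← map_mul, mul_nonsing_inv _ ((isUnit_iff_isUnit_det _).mp hT), map_one]
  let r : Fin n := ⟨i - 1, by omega⟩
  let c : Fin n := ⟨j - 1, by omega⟩
  have hcol : ∀ t : Fin n, e (blockTridiag n m A B C)⁻¹ t c = Z (t + 1) j := fun t => by
    rw [show j = (c : ℕ) + 1 by simp only [c]; omega, hZ]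
    rfl
  have hrow := congrFun (congrFun hTT r) c
  rw [one_apply_ne (by simp only [ne_eq, Fin.ext_iff, r, c]; omega), mul_apply] at hrow
  simp only [hcol, e, compRingEquiv_symm_apply, comp_symm_blockTridiag_apply] at hrow
  rw [Fin.sum_univ_eq_sum_range (fun t => (if (r : ℕ) = t then A (r + 1)
      else if (r : ℕ) + 1 = t then B (r + 1) else if t + 1 = (r : ℕ) then C (t + 1) else 0) *
        Z (t + 1) j),
    sum_range_tridiag_mul _ _ C (Z · j) hC0 (by simp only [r]; omega)] at hrow
  have hr : (r : ℕ) = i - 1 := rfl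
  rwa [hr, show i - 1 + 1 = i by omega, show i - 1 + 2 = i + 1 by omega] at hrow

theorem norm_inv_block_le_mul_norm_succ {n m : ℕ} (hm : 1 ≤ m)
    {A B C : ℕ → Matrix (Fin m) (Fin m) ℂ}
    (hC0 : C 0 = 0) (hT : IsUnit (blockTridiag n m A B C))
    (hB : ∀ i, 1 ≤ i → i ≤ n - 1 → IsUnit (B i))
    (hA : ∀ i, 1 ≤ i → i ≤ n → IsUnit (A i))
    (hdom : ∀ i, 1 ≤ i → i ≤ n → ‖(A i)⁻¹ * C (i - 1)‖ + ‖(A i)⁻¹ * B i‖ ≤ 1)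
    {Z : ℕ → ℕ → Matrix (Fin m) (Fin m) ℂ}
    (hZ : ∀ i j : Fin n, Z ((i : ℕ) + 1) ((j : ℕ) + 1) =
      Matrix.of fun k l => (blockTridiag n m A B C)⁻¹ (i, k) (j, l))
    {i j : ℕ} (hi : 1 ≤ i) (hij : i < j) (hj : j ≤ n) :
    ‖Z i j‖ ≤ ‖(A i)⁻¹ * B i‖ / (1 - ‖(A i)⁻¹ * C (i - 1)‖) * ‖Z (i + 1) j‖ := by
  have : Nonempty (Fin m) := ⟨⟨0, hm⟩⟩
  have hstep : ∀ i, 1 ≤ i → i < j →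
      ‖(A i)⁻¹ * C (i - 1)‖ * ‖Z (i - 1) j‖ ≤ ‖(A i)⁻¹ * C (i - 1)‖ * ‖Z i j‖ →
      ‖Z i j‖ ≤ ‖(A i)⁻¹ * B i‖ / (1 - ‖(A i)⁻¹ * C (i - 1)‖) * ‖Z (i + 1) j‖ := by
    intro i hi hij hc
    have hb : 0 < ‖(A i)⁻¹ * B i‖ := norm_pos_iff.mpr
      ((isUnit_nonsing_inv_iff.mpr (hA i hi (by omega))).mul (hB i hi (by omega))).ne_zero
    exact le_div_one_sub_mul hb (hdom i hi (by omega)) hc <|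
      norm_le_of_add_mul_add_eq_zero (hA i hi (by omega))
        (blockTridiag_inv_block_row_eq_zero hC0 hT hZ hi hij hj)
  induction i, hi using Nat.le_induction with
  | base => exact hstep 1 le_rfl hij (by simp [hC0])
  | succ i hi ih =>
    refine hstep (i + 1) (by omega) hij (mul_le_mul_of_nonneg_left ?_ (norm_nonneg _))
    have hdomi := hdom i hi (by omega)
    have hτ_le_one : ‖(A i)⁻¹ * B i‖ / (1 - ‖(A i)⁻¹ * C (i - 1)‖) ≤ 1 :=
      div_le_one_of_le₀ (by linarith) (by linarith [norm_nonneg ((A i)⁻¹ * B i)])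
    rw [Nat.add_sub_cancel]
    exact (ih (by omega)).trans (mul_le_of_le_one_left (norm_nonneg _) hτ_le_one)

theorem offdiag_bound_upper_triangle_general
    (n m : ℕ) (hm : 1 ≤ m)
    (A B C : ℕ → Matrix (Fin m) (Fin m) ℂ)
    (hC0 : C 0 = 0)
    (hAinv : IsUnit (blockTridiag n m A B C))
    (hB : ∀ i, 1 ≤ i → i ≤ n - 1 → IsUnit (B i))
    (hAi : ∀ i, 1 ≤ i → i ≤ n → IsUnit (A i))
    (hdom : ∀ i, 1 ≤ i → i ≤ n → ‖(A i)⁻¹ * C (i - 1)‖ + ‖(A i)⁻¹ * B i‖ ≤ 1)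
    (τ : ℕ → ℝ)
    (hτ : ∀ i, 1 ≤ i → i ≤ n → τ i = ‖(A i)⁻¹ * B i‖ / (1 - ‖(A i)⁻¹ * C (i - 1)‖))
    (Z : ℕ → ℕ → Matrix (Fin m) (Fin m) ℂ)
    (hZ : ∀ i j : Fin n, Z ((i : ℕ) + 1) ((j : ℕ) + 1) =
      Matrix.of fun k l => (blockTridiag n m A B C)⁻¹ (i, k) (j, l)) :
    ∀ i j, 1 ≤ i → i < j → j ≤ n →
      ‖Z i j‖ ≤ ‖Z j j‖ * ∏ k ∈ Finset.Icc i (j - 1), τ k := by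
  intro i j hi hij hj
  have hτ_nonneg : ∀ k, i ≤ k → k < j → 0 ≤ τ k := fun k hik hkj => by
    rw [hτ k (by omega) (by omega)]
    exact div_nonneg (norm_nonneg _)
      (by linarith [hdom k (by omega) (by omega), norm_nonneg ((A k)⁻¹ * B k)])
  rw [Icc_sub_one_right_eq_Ico_of_not_isMin (not_isMin_of_lt hij)]
  refine le_mul_prod_Ico_of_le_mul (f := fun k => ‖Z k j‖) hij.le hτ_nonneg fun k hik hkj => ?_
  rw [hτ k (by omega) (by omega)]
  exact norm_inv_block_le_mul_norm_succ hm hC0 hAinv hB hAi hdom hZ (by omega) hkj hj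

theorem offdiag_bound_upper_triangle
    (n m : ℕ) (hn : 2 ≤ n) (hm : 1 ≤ m)
    (A B C : ℕ → Matrix (Fin m) (Fin m) ℂ)
    (hC0 : C 0 = 0) (hBn : B n = 0)
    (hAinv : IsUnit (blockTridiag n m A B C))
    (hB : ∀ i, 1 ≤ i → i ≤ n - 1 → IsUnit (B i))
    (hC : ∀ i, 1 ≤ i → i ≤ n - 1 → IsUnit (C i))
    (hAi : ∀ i, 1 ≤ i → i ≤ n → IsUnit (A i))
    (hdom : ∀ i, 1 ≤ i → i ≤ n → ‖(A i)⁻¹ * C (i - 1)‖ + ‖(A i)⁻¹ * B i‖ ≤ 1)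
    (hB1 : ‖(A 1)⁻¹ * B 1‖ < 1)
    (hCn : ‖(A n)⁻¹ * C (n - 1)‖ < 1)
    (τ : ℕ → ℝ)
    (hτ : ∀ i, 1 ≤ i → i ≤ n → τ i = ‖(A i)⁻¹ * B i‖ / (1 - ‖(A i)⁻¹ * C (i - 1)‖))
    (Z : ℕ → ℕ → Matrix (Fin m) (Fin m) ℂ)
    (hZ : ∀ i j : Fin n, Z ((i : ℕ) + 1) ((j : ℕ) + 1) =
      Matrix.of fun k l => (blockTridiag n m A B C)⁻¹ (i, k) (j, l)) :
    ∀ i j, 1 ≤ i → i < j → j ≤ n →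
      ‖Z i j‖ ≤ ‖Z j j‖ * ∏ k ∈ Finset.Icc i (j - 1), τ k :=
  offdiag_bound_upper_triangle_general n m hm A B C hC0 hAinv hB hAi hdom τ hτ Z hZ
end

section
/- Under the standing assumptions, the blocks Z_{ij} of the inverse A⁻¹ satisfy ‖Z_{ij}‖ ≤ ‖Z_{jj}‖ · ∏_{k=j+1}^{i} ω_k for all i > j. -/
open scoped Matrix
attribute [local instance] Matrix.linftyOpNormedRing

/-!
Fix a block column `j` of `T⁻¹` and write `X t` for its `t`-th block, with `X (n + 1) = 0`.
For every block row `t ≠ j`, `T * T⁻¹ = 1` reads `C (t-1) X (t-1) + A t X t + B t X (t+1) = 0`,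
hence `‖X t‖ ≤ c t ‖X (t-1)‖ + b t ‖X (t+1)‖` with `c t = ‖(A t)⁻¹ C (t-1)‖`,
`b t = ‖(A t)⁻¹ B t‖`. Diagonal dominance and `c t > 0` give `b t < 1` and `ω t ≤ 1`, so a
downward induction from `t = n` shows `‖X (t+1)‖ ≤ ‖X t‖` below the diagonal; this turns the
row inequality into `‖X t‖ ≤ ω t ‖X (t-1)‖`, and chaining these from `t = i` down to `j + 1`
gives the bound.
-/

theorem Fin.sum_univ_val_succ_eq_sum_range {M : Type*} [AddCommMonoid M] (n : ℕ) (g : ℕ → M)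
    (h0 : g 0 = 0) (hn : g (n + 1) = 0) :
    ∑ q : Fin n, g (q + 1) = ∑ q ∈ Finset.range (n + 2), g q := by
  rw [Finset.sum_range_succ, Finset.sum_range_succ', Fin.sum_univ_eq_sum_range (fun q => g (q + 1)),
    h0, hn, add_zero, add_zero]

section BlockEntry

variable {α : Type*} {n m : ℕ}

/-- The `(i, j)` block of `N`, indexed from `1` as in the paper and `0` outside `1..n`, so that
the block rows of a tridiagonal product need no boundary cases. -/
def blockEntry [Zero α] (N : Matrix (Fin n × Fin m) (Fin n × Fin m) α) (i j : ℕ) :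
    Matrix (Fin m) (Fin m) α :=
  if h : 1 ≤ i ∧ i ≤ n ∧ 1 ≤ j ∧ j ≤ n then
    Matrix.of fun k l => N (⟨i - 1, by omega⟩, k) (⟨j - 1, by omega⟩, l)
  else 0

theorem blockEntry_val_succ [Zero α] (N : Matrix (Fin n × Fin m) (Fin n × Fin m) α) (i j : Fin n) :
    blockEntry N (i + 1) (j + 1) = Matrix.of fun k l => N (i, k) (j, l) := by
  simp [blockEntry, Nat.succ_le_of_lt i.isLt, Nat.succ_le_of_lt j.isLt]

theorem blockEntry_zero_right [Zero α] (N : Matrix (Fin n × Fin m) (Fin n × Fin m) α) (i : ℕ) :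
    blockEntry N i 0 = 0 := by simp [blockEntry]

theorem blockEntry_succ_size_left [Zero α] (N : Matrix (Fin n × Fin m) (Fin n × Fin m) α) (j : ℕ) :
    blockEntry N (n + 1) j = 0 := by simp [blockEntry]

theorem blockEntry_succ_size_right [Zero α] (N : Matrix (Fin n × Fin m) (Fin n × Fin m) α) (i : ℕ) :
    blockEntry N i (n + 1) = 0 := by simp [blockEntry]

theorem blockEntry_mul [NonUnitalNonAssocSemiring α]
    (M N : Matrix (Fin n × Fin m) (Fin n × Fin m) α) (i j : ℕ) :
    blockEntry (M * N) i j = ∑ q : Fin n, blockEntry M i (q + 1) * blockEntry N (q + 1) j := by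
  by_cases h : 1 ≤ i ∧ i ≤ n ∧ 1 ≤ j ∧ j ≤ n
  · ext k l
    simp [blockEntry, h, Matrix.mul_apply, Fintype.sum_prod_type, Matrix.sum_apply]
  · rw [blockEntry, dif_neg h]
    symm
    refine Finset.sum_eq_zero fun q _ => ?_
    unfold blockEntry
    split_ifs <;> first | omega | simp

theorem blockEntry_one_of_ne [Zero α] [One α] {i j : ℕ} (hij : i ≠ j) :
    blockEntry (1 : Matrix (Fin n × Fin m) (Fin n × Fin m) α) i j = 0 := by
  unfold blockEntry
  split_ifs with h
  · ext k l
    simp [Matrix.one_apply, Fin.ext_iff]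
    omega
  · rfl

theorem blockEntry_blockTridiag (A B C : ℕ → Matrix (Fin m) (Fin m) ℂ) {i q : ℕ}
    (hi : 1 ≤ i ∧ i ≤ n) (hq : 1 ≤ q ∧ q ≤ n) :
    blockEntry (blockTridiag n m A B C) i q =
      if i = q then A i else if i + 1 = q then B i else if q + 1 = i then C q else 0 := by
  ext k l
  simp only [blockEntry, blockTridiag, Matrix.of_apply, Fin.ext_iff, Nat.sub_add_cancel hi.1,
    Nat.sub_add_cancel hq.1]
  split_ifs <;> first | rfl | omega

theorem blockEntry_blockTridiag_mul (A B C : ℕ → Matrix (Fin m) (Fin m) ℂ)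
    (N : Matrix (Fin n × Fin m) (Fin n × Fin m) ℂ) {i : ℕ} (hi : 1 ≤ i ∧ i ≤ n) (j : ℕ) :
    blockEntry (blockTridiag n m A B C * N) i j =
      C (i - 1) * blockEntry N (i - 1) j + A i * blockEntry N i j
        + B i * blockEntry N (i + 1) j := by
  have hterm : ∀ q, blockEntry (blockTridiag n m A B C) i q * blockEntry N q j =
      (if q = i - 1 then C q * blockEntry N q j else 0)
        + (if q = i then A i * blockEntry N q j else 0)
        + (if q = i + 1 then B i * blockEntry N q j else 0) := by
    intro q
    by_cases hq : 1 ≤ q ∧ q ≤ n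
    · rw [blockEntry_blockTridiag A B C hi hq]
      split_ifs <;> first | omega | simp only [zero_add, add_zero, zero_mul]
    · have : blockEntry N q j = 0 := by
        unfold blockEntry
        rw [dif_neg (by tauto)]
      simp [this]
  rw [blockEntry_mul]
  refine (Fin.sum_univ_val_succ_eq_sum_range n (fun q =>
      blockEntry (blockTridiag n m A B C) i q * blockEntry N q j)
      (by simp [blockEntry_zero_right]) (by simp [blockEntry_succ_size_right])).trans ?_
  simp only [hterm, Finset.sum_add_distrib, Finset.sum_ite_eq', Finset.mem_range]
  rw [if_pos (by omega), if_pos (by omega), if_pos (by omega)]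

end BlockEntry

theorem Matrix.norm_le_of_mul_add_mul_add_mul_eq_zero {ι R : Type*} [Fintype ι] [DecidableEq ι]
    [NormedCommRing R] {A B C X Y W : Matrix ι ι R} (hA : IsUnit A)
    (h : C * X + A * Y + B * W = 0) :
    ‖Y‖ ≤ ‖A⁻¹ * C‖ * ‖X‖ + ‖A⁻¹ * B‖ * ‖W‖ := by
  have hAY : A * Y = -(C * X + B * W) := eq_neg_iff_add_eq_zero.mpr (by rw [← h]; abel)
  have hY : Y = -(A⁻¹ * C * X + A⁻¹ * B * W) := by
    rw [← Matrix.nonsing_inv_mul_cancel_left A Y ((Matrix.isUnit_iff_isUnit_det A).mp hA), hAY]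
    simp only [mul_neg, mul_add, mul_assoc]
  calc ‖Y‖ ≤ ‖A⁻¹ * C * X‖ + ‖A⁻¹ * B * W‖ := by rw [hY, norm_neg]; exact norm_add_le _ _
    _ ≤ ‖A⁻¹ * C‖ * ‖X‖ + ‖A⁻¹ * B‖ * ‖W‖ := add_le_add (norm_mul_le _ _) (norm_mul_le _ _)

theorem norm_blockEntry_inv_blockTridiag_le {n m : ℕ} (A B C : ℕ → Matrix (Fin m) (Fin m) ℂ)
    (hT : IsUnit (blockTridiag n m A B C)) {t j : ℕ} (ht : 1 ≤ t ∧ t ≤ n) (htj : t ≠ j)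
    (hA : IsUnit (A t)) :
    ‖blockEntry (blockTridiag n m A B C)⁻¹ t j‖ ≤
      ‖(A t)⁻¹ * C (t - 1)‖ * ‖blockEntry (blockTridiag n m A B C)⁻¹ (t - 1) j‖
        + ‖(A t)⁻¹ * B t‖ * ‖blockEntry (blockTridiag n m A B C)⁻¹ (t + 1) j‖ := by
  refine Matrix.norm_le_of_mul_add_mul_add_mul_eq_zero hA ?_
  rw [← blockEntry_blockTridiag_mul A B C _ ht,
    Matrix.mul_nonsing_inv _ ((Matrix.isUnit_iff_isUnit_det _).mp hT), blockEntry_one_of_ne htj]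

theorem le_div_one_sub_mul_of_le_mul_add_mul {x₀ x₁ x₂ c b : ℝ} (h : x₁ ≤ c * x₀ + b * x₂)
    (hx : x₂ ≤ x₁) (hb₀ : 0 ≤ b) (hb₁ : b < 1) : x₁ ≤ c / (1 - b) * x₀ := by
  rw [div_mul_eq_mul_div, le_div_iff₀ (by linarith)]
  nlinarith

theorem le_div_one_sub_mul_pred_of_tridiag {x c b : ℕ → ℝ} {j N : ℕ}
    (hrow : ∀ t, j < t → t ≤ N → x t ≤ c t * x (t - 1) + b t * x (t + 1))
    (hx : ∀ t, 0 ≤ x t) (hb₀ : ∀ t, 0 ≤ b t) (hb₁ : ∀ t, j < t → t ≤ N → b t < 1)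
    (hcb : ∀ t, j < t → t ≤ N → c t + b t ≤ 1) (hN : x (N + 1) = 0) :
    ∀ t, j < t → t ≤ N → x t ≤ c t / (1 - b t) * x (t - 1) := by
  have hanti : ∀ t, t ≤ N → j < t → x (t + 1) ≤ x t := by
    intro t htN
    induction htN using Nat.decreasingInduction with
    | self => intro _; rw [hN]; exact hx N
    | of_succ k hk ih =>
      intro hjk
      have hratio : c (k + 1) / (1 - b (k + 1)) ≤ 1 := by
        rw [div_le_one (by linarith [hb₁ (k + 1) (by omega) hk])]
        linarith [hcb (k + 1) (by omega) hk]
      calc x (k + 1) ≤ c (k + 1) / (1 - b (k + 1)) * x k :=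
            le_div_one_sub_mul_of_le_mul_add_mul (hrow (k + 1) (by omega) hk) (ih (by omega))
              (hb₀ _) (hb₁ (k + 1) (by omega) hk)
        _ ≤ x k := mul_le_of_le_one_left (hx k) hratio
  intro t hjt htN
  exact le_div_one_sub_mul_of_le_mul_add_mul (hrow t hjt htN) (hanti t htN hjt) (hb₀ t)
    (hb₁ t hjt htN)

theorem le_mul_prod_Icc_of_le_mul_pred {x ω : ℕ → ℝ} {j N : ℕ}
    (hω : ∀ t, j < t → t ≤ N → 0 ≤ ω t) (h : ∀ t, j < t → t ≤ N → x t ≤ ω t * x (t - 1)) :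
    ∀ i, j ≤ i → i ≤ N → x i ≤ x j * ∏ k ∈ Finset.Icc (j + 1) i, ω k := by
  intro i hji
  induction i, hji using Nat.le_induction with
  | base => intro _; simp
  | succ i hji ih =>
    intro hiN
    rw [Finset.prod_Icc_succ_top (by omega), ← mul_assoc, mul_comm _ (ω (i + 1))]
    calc x (i + 1) ≤ ω (i + 1) * x i := h (i + 1) (by omega) hiN
      _ ≤ _ := mul_le_mul_of_nonneg_left (ih (by omega)) (hω (i + 1) (by omega) hiN)

theorem offdiag_bound_lower_triangle_general
    (n m : ℕ) (hm : 1 ≤ m)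
    (A B C : ℕ → Matrix (Fin m) (Fin m) ℂ)
    (hAinv : IsUnit (blockTridiag n m A B C))
    (hC : ∀ i, 1 ≤ i → i ≤ n - 1 → IsUnit (C i))
    (hAi : ∀ i, 1 ≤ i → i ≤ n → IsUnit (A i))
    (hdom : ∀ i, 1 ≤ i → i ≤ n → ‖(A i)⁻¹ * C (i - 1)‖ + ‖(A i)⁻¹ * B i‖ ≤ 1)
    (ω : ℕ → ℝ)
    (hω : ∀ i, 1 ≤ i → i ≤ n → ω i = ‖(A i)⁻¹ * C (i - 1)‖ / (1 - ‖(A i)⁻¹ * B i‖))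
    (Z : ℕ → ℕ → Matrix (Fin m) (Fin m) ℂ)
    (hZ : ∀ i j : Fin n, Z ((i : ℕ) + 1) ((j : ℕ) + 1) =
      Matrix.of fun k l => (blockTridiag n m A B C)⁻¹ (i, k) (j, l)) :
    ∀ i j, 1 ≤ j → j < i → i ≤ n →
      ‖Z i j‖ ≤ ‖Z j j‖ * ∏ k ∈ Finset.Icc (j + 1) i, ω k := by
  intro i j hj hji hin
  have : Nonempty (Fin m) := ⟨⟨0, hm⟩⟩
  set T := blockTridiag n m A B C
  set X : ℕ → Matrix (Fin m) (Fin m) ℂ := fun t => blockEntry T⁻¹ t j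
  have hZX : ∀ t, 1 ≤ t → t ≤ n → Z t j = X t := by
    intro t ht htn
    obtain ⟨t, rfl⟩ : ∃ s, t = s + 1 := ⟨t - 1, by omega⟩
    obtain ⟨j, rfl⟩ : ∃ s, j = s + 1 := ⟨j - 1, by omega⟩
    exact (hZ ⟨t, by omega⟩ ⟨j, by omega⟩).trans (blockEntry_val_succ _ _ _).symm
  have hrow : ∀ t, j < t → t ≤ n →
      ‖X t‖ ≤ ‖(A t)⁻¹ * C (t - 1)‖ * ‖X (t - 1)‖ + ‖(A t)⁻¹ * B t‖ * ‖X (t + 1)‖ :=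
    fun t hjt htn => norm_blockEntry_inv_blockTridiag_le A B C hAinv ⟨by omega, htn⟩ (by omega)
      (hAi t (by omega) htn)
  have hB_lt_one : ∀ t, j < t → t ≤ n → ‖(A t)⁻¹ * B t‖ < 1 := by
    intro t hjt htn
    have hunit : IsUnit ((A t)⁻¹ * C (t - 1)) :=
      (Matrix.isUnit_nonsing_inv_iff.mpr (hAi t (by omega) htn)).mul
        (hC (t - 1) (by omega) (by omega))
    linarith [norm_pos_iff.mpr hunit.ne_zero, hdom t (by omega) htn]
  have hratio : ∀ t, j < t → t ≤ n → ‖X t‖ ≤ ω t * ‖X (t - 1)‖ := by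
    intro t hjt htn
    rw [hω t (by omega) htn]
    exact le_div_one_sub_mul_pred_of_tridiag hrow (fun _ => norm_nonneg _) (fun _ => norm_nonneg _)
      hB_lt_one (fun t hjt htn => hdom t (by omega) htn)
      (by simp [X, blockEntry_succ_size_left]) t hjt htn
  rw [hZX i (by omega) hin, hZX j hj (by omega)]
  refine le_mul_prod_Icc_of_le_mul_pred (fun t hjt htn => ?_) hratio i hji.le hin
  rw [hω t (by omega) htn]
  exact div_nonneg (norm_nonneg _) (by linarith [hB_lt_one t hjt htn])

theorem offdiag_bound_lower_triangle
    (n m : ℕ) (hn : 2 ≤ n) (hm : 1 ≤ m)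
    (A B C : ℕ → Matrix (Fin m) (Fin m) ℂ)
    (hC0 : C 0 = 0) (hBn : B n = 0)
    (hAinv : IsUnit (blockTridiag n m A B C))
    (hB : ∀ i, 1 ≤ i → i ≤ n - 1 → IsUnit (B i))
    (hC : ∀ i, 1 ≤ i → i ≤ n - 1 → IsUnit (C i))
    (hAi : ∀ i, 1 ≤ i → i ≤ n → IsUnit (A i))
    (hdom : ∀ i, 1 ≤ i → i ≤ n → ‖(A i)⁻¹ * C (i - 1)‖ + ‖(A i)⁻¹ * B i‖ ≤ 1)
    (hB1 : ‖(A 1)⁻¹ * B 1‖ < 1)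
    (hCn : ‖(A n)⁻¹ * C (n - 1)‖ < 1)
    (ω : ℕ → ℝ)
    (hω : ∀ i, 1 ≤ i → i ≤ n → ω i = ‖(A i)⁻¹ * C (i - 1)‖ / (1 - ‖(A i)⁻¹ * B i‖))
    (Z : ℕ → ℕ → Matrix (Fin m) (Fin m) ℂ)
    (hZ : ∀ i j : Fin n, Z ((i : ℕ) + 1) ((j : ℕ) + 1) =
      Matrix.of fun k l => (blockTridiag n m A B C)⁻¹ (i, k) (j, l)) :
    ∀ i j, 1 ≤ j → j < i → i ≤ n →
      ‖Z i j‖ ≤ ‖Z j j‖ * ∏ k ∈ Finset.Icc (j + 1) i, ω k :=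
  offdiag_bound_lower_triangle_general n m hm A B C hAinv hC hAi hdom ω hω Z hZ
end

section
/- Under the standing assumptions, for each i = 1,…,n such that ‖A_i⁻¹‖⁻¹ − τ_{i−1}‖C_{i−1}‖ − ω_{i+1}‖B_i‖ > 0, the diagonal block Z_{ii} of the inverse A⁻¹ satisfies ‖Z_{ii}‖ ≤ ‖I‖/(‖A_i⁻¹‖⁻¹ − τ_{i−1}‖C_{i−1}‖ − ω_{i+1}‖B_i‖), where C_0 = B_n = 0 and τ_0 = ω_{n+1} = 0. -/
open scoped Matrix
attribute [local instance] Matrix.linftyOpNormedRing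

/-!
Fix a block column `j` of `A⁻¹` and write `c_k = ‖A_k⁻¹ C_{k-1}‖`, `b_k = ‖A_k⁻¹ B_k‖`, so that
`c_k + b_k ≤ 1`. Off the diagonal, block row `k` of `A A⁻¹ = I` gives
`‖Z_{kj}‖ ≤ c_k ‖Z_{k-1,j}‖ + b_k ‖Z_{k+1,j}‖`. Starting from `c_1 = 0`, induction on `k` shows
`‖Z_{kj}‖ ≤ τ_k ‖Z_{k+1,j}‖` for `k < j`, the point being that `τ_{k-1} ≤ 1` lets the term
`c_k ‖Z_{k-1,j}‖` be absorbed into the left side; symmetrically, starting from `b_n = 0`,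
`‖Z_{kj}‖ ≤ ω_k ‖Z_{k-1,j}‖` for `k > j`. Substituting both neighbours of `Z_{jj}` into the
diagonal block row `C_{j-1} Z_{j-1,j} + A_j Z_{jj} + B_j Z_{j+1,j} = I` and using
`‖Z_{jj}‖ ≤ ‖A_j⁻¹‖ ‖A_j Z_{jj}‖` gives the bound.
-/

open Matrix Finset

/-- Block `(r, p)` of `blockTridiag`: `r` and `p` count from `0`, while `A`, `B`, `C` are indexed
from `1`. -/
def tridiagBlock {R : Type*} [Zero R] (A B C : ℕ → R) (r p : ℕ) : R :=
  if r = p then A (r + 1) else if r + 1 = p then B (r + 1) else if p + 1 = r then C (p + 1) else 0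

theorem sum_tridiagBlock_mul {R : Type*} [Semiring R] {n : ℕ} (A B C W : ℕ → R)
    (hC0 : C 0 = 0) (hBn : B n = 0) {r : ℕ} (hr : r < n) :
    ∑ p : Fin n, tridiagBlock A B C r p * W (p + 1) =
      C r * W r + A (r + 1) * W (r + 1) + B (r + 1) * W (r + 2) := by
  have hsplit (p : ℕ) : tridiagBlock A B C r p * W (p + 1) =
      (if r = p then A (r + 1) * W (r + 1) else 0) +
      (if r + 1 = p then B (r + 1) * W (r + 2) else 0) +
      (if p + 1 = r then C r * W r else 0) := by
    unfold tridiagBlock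
    split_ifs <;> first | omega | subst_vars; simp
  rw [Fin.sum_univ_eq_sum_range (fun p => tridiagBlock A B C r p * W (p + 1)),
    sum_congr rfl fun p _ => hsplit p, sum_add_distrib, sum_add_distrib, sum_ite_eq, sum_ite_eq]
  have hB : (if r + 1 ∈ range n then B (r + 1) * W (r + 2) else 0) = B (r + 1) * W (r + 2) := by
    split_ifs with h
    · rfl
    · rw [show r + 1 = n by simp at h; omega, hBn, zero_mul]
  have hC : (∑ p ∈ range n, if p + 1 = r then C r * W r else 0) = C r * W r := by
    rcases r with _ | s
    · simp [hC0]
    · simp [hr.trans' s.lt_succ_self]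
  rw [if_pos (mem_range.2 hr), hB, hC, add_comm, ← add_assoc]

theorem comp_symm_blockTridiag (n m : ℕ) (A B C : ℕ → Matrix (Fin m) (Fin m) ℂ) (r p : Fin n) :
    (comp (Fin n) (Fin n) (Fin m) (Fin m) ℂ).symm (blockTridiag n m A B C) r p =
      tridiagBlock A B C r p := by
  ext k l
  simp only [comp_symm_apply, blockTridiag, tridiagBlock, of_apply, Fin.val_inj]
  split_ifs <;> simp_all

section RowBounds

variable {ι 𝕜 : Type*} [Fintype ι] [DecidableEq ι] [NormedCommRing 𝕜]

theorem norm_le_of_tridiag_row_eq_zero {a b c x y z : Matrix ι ι 𝕜} (ha : IsUnit a)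
    (h : c * x + a * z + b * y = 0) : ‖z‖ ≤ ‖a⁻¹ * c‖ * ‖x‖ + ‖a⁻¹ * b‖ * ‖y‖ := by
  have hz : z = -(a⁻¹ * c * x + a⁻¹ * b * y) := by
    rw [← nonsing_inv_mul_cancel_left a z ((isUnit_iff_isUnit_det a).1 ha),
      eq_neg_of_add_eq_zero_right (a := c * x + b * y) (b := a * z) (by rw [← h]; abel)]
    noncomm_ring
  calc ‖z‖ ≤ ‖a⁻¹ * c * x‖ + ‖a⁻¹ * b * y‖ := by rw [hz, norm_neg]; exact norm_add_le _ _
    _ ≤ ‖a⁻¹ * c‖ * ‖x‖ + ‖a⁻¹ * b‖ * ‖y‖ := add_le_add (norm_mul_le _ _) (norm_mul_le _ _)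

theorem inv_norm_inv_mul_norm_le_of_tridiag_row_eq_one {a b c x y z : Matrix ι ι 𝕜}
    (ha : IsUnit a) (h : c * x + a * z + b * y = 1) :
    ‖a⁻¹‖⁻¹ * ‖z‖ ≤ ‖(1 : Matrix ι ι 𝕜)‖ + ‖c‖ * ‖x‖ + ‖b‖ * ‖y‖ := by
  have haz : a * z = 1 - c * x - b * y := by rw [← h]; abel
  have hz : ‖z‖ ≤ ‖a⁻¹‖ * ‖a * z‖ := by
    conv_lhs => rw [← nonsing_inv_mul_cancel_left a z ((isUnit_iff_isUnit_det a).1 ha)]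
    exact norm_mul_le _ _
  calc ‖a⁻¹‖⁻¹ * ‖z‖ ≤ ‖1 - c * x - b * y‖ :=
        inv_mul_le_of_le_mul₀ (norm_nonneg _) (norm_nonneg _) (haz ▸ hz)
    _ ≤ ‖(1 : Matrix ι ι 𝕜)‖ + ‖c * x‖ + ‖b * y‖ :=
        (norm_sub_le _ _).trans (add_le_add_left (norm_sub_le _ _) _)
    _ ≤ ‖(1 : Matrix ι ι 𝕜)‖ + ‖c‖ * ‖x‖ + ‖b‖ * ‖y‖ := by
        gcongr <;> exact norm_mul_le _ _

theorem norm_inv_mul_lt_one_of_isUnit [Nonempty ι] [Nontrivial 𝕜] {a u v : Matrix ι ι 𝕜}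
    (ha : IsUnit a) (hv : IsUnit v) (h : ‖a⁻¹ * u‖ + ‖a⁻¹ * v‖ ≤ 1) : ‖a⁻¹ * u‖ < 1 := by
  have : 0 < ‖a⁻¹ * v‖ := norm_pos_iff.2 ((isUnit_nonsing_inv_iff.2 ha).mul hv).ne_zero
  linarith

end RowBounds

theorem le_div_one_sub_mul_of_le {c b u x y : ℝ} (hc : c < 1) (hx : x ≤ c * u + b * y)
    (hu : c * u ≤ c * x) : x ≤ b / (1 - c) * y := by
  rw [div_mul_eq_mul_div, le_div_iff₀ (by linarith)]
  linarith

theorem le_div_one_sub_mul_succ_of_row_le {c b z : ℕ → ℝ} {j : ℕ} (hc1 : c 1 = 0)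
    (hc : ∀ k, 0 ≤ c k) (hz : ∀ k, 0 ≤ z k) (hlt : ∀ k, 1 ≤ k → k < j → c k < 1)
    (hcb : ∀ k, 1 ≤ k → k < j → c k + b k ≤ 1)
    (hrow : ∀ k, 1 ≤ k → k < j → z k ≤ c k * z (k - 1) + b k * z (k + 1)) :
    ∀ k, 1 ≤ k → k < j → z k ≤ b k / (1 - c k) * z (k + 1) := by
  intro k hk
  induction k, hk using Nat.le_induction with
  | base =>
    exact fun h1 => le_div_one_sub_mul_of_le (hlt 1 le_rfl h1) (hrow 1 le_rfl h1) (by simp [hc1])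
  | succ k hk ih =>
    intro hkj
    have hratio : b k / (1 - c k) ≤ 1 :=
      div_le_one_of_le₀ (by linarith [hcb k hk (by omega)]) (by linarith [hlt k hk (by omega)])
    have hzk : z k ≤ z (k + 1) := (ih (by omega)).trans (mul_le_of_le_one_left (hz _) hratio)
    exact le_div_one_sub_mul_of_le (hlt _ (by omega) hkj) (hrow _ (by omega) hkj)
      (mul_le_mul_of_nonneg_left hzk (hc _))

theorem le_div_one_sub_mul_pred_of_row_le {c b z : ℕ → ℝ} {j n : ℕ} (hbn : b n = 0)
    (hb : ∀ k, 0 ≤ b k) (hz : ∀ k, 0 ≤ z k) (hlt : ∀ k, j < k → k ≤ n → b k < 1)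
    (hcb : ∀ k, j < k → k ≤ n → c k + b k ≤ 1)
    (hrow : ∀ k, j < k → k ≤ n → z k ≤ c k * z (k - 1) + b k * z (k + 1)) :
    ∀ k, j < k → k ≤ n → z k ≤ c k / (1 - b k) * z (k - 1) := by
  intro k hjk hkn
  revert hjk
  induction hkn using Nat.decreasingInduction with
  | self =>
    intro hjk
    exact le_div_one_sub_mul_of_le (u := z (n + 1)) (hlt n hjk le_rfl)
      (by linarith [hrow n hjk le_rfl]) (by simp [hbn])
  | of_succ k hk ih =>
    intro hjk
    have ih' : z (k + 1) ≤ c (k + 1) / (1 - b (k + 1)) * z k := by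
      simpa using ih (by omega)
    have hratio : c (k + 1) / (1 - b (k + 1)) ≤ 1 :=
      div_le_one_of_le₀ (by linarith [hcb (k + 1) (by omega) hk])
        (by linarith [hlt (k + 1) (by omega) hk])
    have hzk : z (k + 1) ≤ z k := ih'.trans (mul_le_of_le_one_left (hz _) hratio)
    exact le_div_one_sub_mul_of_le (u := z (k + 1)) (hlt k hjk hk.le)
      (by linarith [hrow k hjk hk.le]) (mul_le_mul_of_nonneg_left hzk (hb _))

section BlockTridiagInverse

variable {n m : ℕ} {A B C : ℕ → Matrix (Fin m) (Fin m) ℂ} {Z : ℕ → ℕ → Matrix (Fin m) (Fin m) ℂ}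

-- `Z 0 j` and `Z (n + 1) j` are not determined by `hZ`; they only occur multiplied by `C 0 = 0`
-- and `B n = 0`.
theorem blockTridiag_inv_block_row (hC0 : C 0 = 0) (hBn : B n = 0)
    (hM : IsUnit (blockTridiag n m A B C))
    (hZ : ∀ i j : Fin n, Z ((i : ℕ) + 1) ((j : ℕ) + 1) =
      Matrix.of fun k l => (blockTridiag n m A B C)⁻¹ (i, k) (j, l))
    {i j : ℕ} (hi : 1 ≤ i) (hin : i ≤ n) (hj : 1 ≤ j) (hjn : j ≤ n) :
    C (i - 1) * Z (i - 1) j + A i * Z i j + B i * Z (i + 1) j = if i = j then 1 else 0 := by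
  obtain ⟨r, rfl⟩ : ∃ r, i = r + 1 := ⟨i - 1, by omega⟩
  obtain ⟨s, rfl⟩ : ∃ s, j = s + 1 := ⟨j - 1, by omega⟩
  let e := (compRingEquiv (Fin n) (Fin m) ℂ).symm
  have hprod : e (blockTridiag n m A B C) * e (blockTridiag n m A B C)⁻¹ = 1 := by
    rw [← map_mul, mul_nonsing_inv _ ((isUnit_iff_isUnit_det _).1 hM), map_one]
  have hblock := congr_fun (congr_fun hprod ⟨r, by omega⟩) ⟨s, by omega⟩
  have hZ' : ∀ p : Fin n, (comp (Fin n) (Fin n) (Fin m) (Fin m) ℂ).symm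
      (blockTridiag n m A B C)⁻¹ p ⟨s, by omega⟩ = Z (p + 1) (s + 1) :=
    fun p => (hZ p ⟨s, by omega⟩).symm
  have hsum := sum_tridiagBlock_mul A B C (fun p => Z p (s + 1)) hC0 hBn (show r < n by omega)
  rw [mul_apply, one_apply] at hblock
  simp only [e, compRingEquiv_symm_apply, comp_symm_blockTridiag, hZ'] at hblock
  rw [hsum] at hblock
  simpa [Fin.ext_iff] using hblock

theorem blockTridiag_inv_block_norm_le (hC0 : C 0 = 0) (hBn : B n = 0)
    (hM : IsUnit (blockTridiag n m A B C))
    (hZ : ∀ i j : Fin n, Z ((i : ℕ) + 1) ((j : ℕ) + 1) =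
      Matrix.of fun k l => (blockTridiag n m A B C)⁻¹ (i, k) (j, l))
    (hA : ∀ i, 1 ≤ i → i ≤ n → IsUnit (A i))
    {i j : ℕ} (hi : 1 ≤ i) (hin : i ≤ n) (hj : 1 ≤ j) (hjn : j ≤ n) (hij : i ≠ j) :
    ‖Z i j‖ ≤ ‖(A i)⁻¹ * C (i - 1)‖ * ‖Z (i - 1) j‖ + ‖(A i)⁻¹ * B i‖ * ‖Z (i + 1) j‖ :=
  norm_le_of_tridiag_row_eq_zero (hA i hi hin)
    ((blockTridiag_inv_block_row hC0 hBn hM hZ hi hin hj hjn).trans (if_neg hij))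

theorem blockTridiag_inv_block_norm_le_succ [NeZero m] (hC0 : C 0 = 0) (hBn : B n = 0)
    (hM : IsUnit (blockTridiag n m A B C))
    (hZ : ∀ i j : Fin n, Z ((i : ℕ) + 1) ((j : ℕ) + 1) =
      Matrix.of fun k l => (blockTridiag n m A B C)⁻¹ (i, k) (j, l))
    (hA : ∀ i, 1 ≤ i → i ≤ n → IsUnit (A i)) (hB : ∀ i, 1 ≤ i → i ≤ n - 1 → IsUnit (B i))
    (hdom : ∀ i, 1 ≤ i → i ≤ n → ‖(A i)⁻¹ * C (i - 1)‖ + ‖(A i)⁻¹ * B i‖ ≤ 1)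
    {i j : ℕ} (hi : 1 ≤ i) (hij : i < j) (hjn : j ≤ n) :
    ‖Z i j‖ ≤ ‖(A i)⁻¹ * B i‖ / (1 - ‖(A i)⁻¹ * C (i - 1)‖) * ‖Z (i + 1) j‖ := by
  refine le_div_one_sub_mul_succ_of_row_le (c := fun k => ‖(A k)⁻¹ * C (k - 1)‖)
    (b := fun k => ‖(A k)⁻¹ * B k‖) (z := fun k => ‖Z k j‖) (by simp [hC0])
    (fun _ => norm_nonneg _) (fun _ => norm_nonneg _) (fun k hk hkj => ?_)
    (fun k hk hkj => hdom k hk (by omega))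
    (fun k hk hkj => blockTridiag_inv_block_norm_le hC0 hBn hM hZ hA hk (by omega)
      (by omega) hjn hkj.ne) i hi hij
  rcases hk.eq_or_lt with rfl | hk1
  · simp [hC0]
  · exact norm_inv_mul_lt_one_of_isUnit (hA k hk (by omega)) (hB k hk (by omega))
      (hdom k hk (by omega))

theorem blockTridiag_inv_block_norm_le_pred [NeZero m] (hC0 : C 0 = 0) (hBn : B n = 0)
    (hM : IsUnit (blockTridiag n m A B C))
    (hZ : ∀ i j : Fin n, Z ((i : ℕ) + 1) ((j : ℕ) + 1) =
      Matrix.of fun k l => (blockTridiag n m A B C)⁻¹ (i, k) (j, l))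
    (hA : ∀ i, 1 ≤ i → i ≤ n → IsUnit (A i)) (hC : ∀ i, 1 ≤ i → i ≤ n - 1 → IsUnit (C i))
    (hdom : ∀ i, 1 ≤ i → i ≤ n → ‖(A i)⁻¹ * C (i - 1)‖ + ‖(A i)⁻¹ * B i‖ ≤ 1)
    {i j : ℕ} (hj : 1 ≤ j) (hji : j < i) (hin : i ≤ n) :
    ‖Z i j‖ ≤ ‖(A i)⁻¹ * C (i - 1)‖ / (1 - ‖(A i)⁻¹ * B i‖) * ‖Z (i - 1) j‖ := by
  refine le_div_one_sub_mul_pred_of_row_le (c := fun k => ‖(A k)⁻¹ * C (k - 1)‖)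
    (b := fun k => ‖(A k)⁻¹ * B k‖) (z := fun k => ‖Z k j‖) (by simp [hBn])
    (fun _ => norm_nonneg _) (fun _ => norm_nonneg _) (fun k hjk hkn => ?_)
    (fun k hjk hkn => hdom k (by omega) hkn)
    (fun k hjk hkn => blockTridiag_inv_block_norm_le hC0 hBn hM hZ hA (by omega) hkn
      hj (by omega) hjk.ne') i hji hin
  rcases hkn.eq_or_lt with rfl | hkn1
  · simp [hBn]
  · exact norm_inv_mul_lt_one_of_isUnit (hA k (by omega) hkn) (hC (k - 1) (by omega) (by omega))
      ((add_comm _ _).trans_le (hdom k (by omega) hkn))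

end BlockTridiagInverse

theorem diag_block_upper_bound_general
    (n m : ℕ) (hm : 1 ≤ m)
    (A B C : ℕ → Matrix (Fin m) (Fin m) ℂ)
    (hC0 : C 0 = 0) (hBn : B n = 0)
    (hAinv : IsUnit (blockTridiag n m A B C))
    (hB : ∀ i, 1 ≤ i → i ≤ n - 1 → IsUnit (B i))
    (hC : ∀ i, 1 ≤ i → i ≤ n - 1 → IsUnit (C i))
    (hAi : ∀ i, 1 ≤ i → i ≤ n → IsUnit (A i))
    (hdom : ∀ i, 1 ≤ i → i ≤ n → ‖(A i)⁻¹ * C (i - 1)‖ + ‖(A i)⁻¹ * B i‖ ≤ 1)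
    (τ : ℕ → ℝ)
    (hτ : ∀ i, 1 ≤ i → i ≤ n → τ i = ‖(A i)⁻¹ * B i‖ / (1 - ‖(A i)⁻¹ * C (i - 1)‖))
    (ω : ℕ → ℝ)
    (hω : ∀ i, 1 ≤ i → i ≤ n → ω i = ‖(A i)⁻¹ * C (i - 1)‖ / (1 - ‖(A i)⁻¹ * B i‖))
    (Z : ℕ → ℕ → Matrix (Fin m) (Fin m) ℂ)
    (hZ : ∀ i j : Fin n, Z ((i : ℕ) + 1) ((j : ℕ) + 1) =
      Matrix.of fun k l => (blockTridiag n m A B C)⁻¹ (i, k) (j, l)) :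
    ∀ i, 1 ≤ i → i ≤ n →
      0 < ‖(A i)⁻¹‖⁻¹ - τ (i - 1) * ‖C (i - 1)‖ - ω (i + 1) * ‖B i‖ →
      ‖Z i i‖ ≤ ‖(1 : Matrix (Fin m) (Fin m) ℂ)‖ /
        (‖(A i)⁻¹‖⁻¹ - τ (i - 1) * ‖C (i - 1)‖ - ω (i + 1) * ‖B i‖) := by
  intro i hi hin hpos
  have : NeZero m := ⟨by omega⟩
  have hsub : ‖C (i - 1)‖ * ‖Z (i - 1) i‖ ≤ τ (i - 1) * ‖C (i - 1)‖ * ‖Z i i‖ := by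
    rcases hi.eq_or_lt with rfl | hi1
    · simp [hC0]
    have hup := blockTridiag_inv_block_norm_le_succ hC0 hBn hAinv hZ hAi hB hdom
      (i := i - 1) (by omega) (by omega) hin
    rw [Nat.sub_add_cancel hi] at hup
    rw [hτ (i - 1) (by omega) (by omega)]
    exact (mul_le_mul_of_nonneg_left hup (norm_nonneg _)).trans_eq (by ring)
  have hsuper : ‖B i‖ * ‖Z (i + 1) i‖ ≤ ω (i + 1) * ‖B i‖ * ‖Z i i‖ := by
    rcases hin.eq_or_lt with rfl | hin1
    · simp [hBn]
    have hdown := blockTridiag_inv_block_norm_le_pred hC0 hBn hAinv hZ hAi hC hdom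
      (i := i + 1) hi (by omega) hin1
    rw [Nat.add_sub_cancel] at hdown
    rw [hω (i + 1) (by omega) hin1, Nat.add_sub_cancel]
    exact (mul_le_mul_of_nonneg_left hdown (norm_nonneg _)).trans_eq (by ring)
  have hdiag := inv_norm_inv_mul_norm_le_of_tridiag_row_eq_one (hAi i hi hin)
    ((blockTridiag_inv_block_row hC0 hBn hAinv hZ hi hin hi hin).trans (if_pos rfl))
  rw [le_div_iff₀ hpos]
  linarith

theorem diag_block_upper_bound
    (n m : ℕ) (hn : 2 ≤ n) (hm : 1 ≤ m)
    (A B C : ℕ → Matrix (Fin m) (Fin m) ℂ)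
    (hC0 : C 0 = 0) (hBn : B n = 0)
    (hAinv : IsUnit (blockTridiag n m A B C))
    (hB : ∀ i, 1 ≤ i → i ≤ n - 1 → IsUnit (B i))
    (hC : ∀ i, 1 ≤ i → i ≤ n - 1 → IsUnit (C i))
    (hAi : ∀ i, 1 ≤ i → i ≤ n → IsUnit (A i))
    (hdom : ∀ i, 1 ≤ i → i ≤ n → ‖(A i)⁻¹ * C (i - 1)‖ + ‖(A i)⁻¹ * B i‖ ≤ 1)
    (hB1 : ‖(A 1)⁻¹ * B 1‖ < 1)
    (hCn : ‖(A n)⁻¹ * C (n - 1)‖ < 1)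
    (τ : ℕ → ℝ)
    (hτ : ∀ i, 1 ≤ i → i ≤ n → τ i = ‖(A i)⁻¹ * B i‖ / (1 - ‖(A i)⁻¹ * C (i - 1)‖))
    (ω : ℕ → ℝ)
    (hω : ∀ i, 1 ≤ i → i ≤ n → ω i = ‖(A i)⁻¹ * C (i - 1)‖ / (1 - ‖(A i)⁻¹ * B i‖))
    (hτ0 : τ 0 = 0)
    (hωn1 : ω (n + 1) = 0)
    (Z : ℕ → ℕ → Matrix (Fin m) (Fin m) ℂ)
    (hZ : ∀ i j : Fin n, Z ((i : ℕ) + 1) ((j : ℕ) + 1) =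
      Matrix.of fun k l => (blockTridiag n m A B C)⁻¹ (i, k) (j, l)) :
    ∀ i, 1 ≤ i → i ≤ n →
      0 < ‖(A i)⁻¹‖⁻¹ - τ (i - 1) * ‖C (i - 1)‖ - ω (i + 1) * ‖B i‖ →
      ‖Z i i‖ ≤ ‖(1 : Matrix (Fin m) (Fin m) ℂ)‖ /
        (‖(A i)⁻¹‖⁻¹ - τ (i - 1) * ‖C (i - 1)‖ - ω (i + 1) * ‖B i‖) :=
  diag_block_upper_bound_general n m hm A B C hC0 hBn hAinv hB hC hAi hdom τ hτ ω hω Z hZ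
end

section
/- Under the standing assumptions, the superdiagonal and subdiagonal blocks of the inverse A⁻¹ satisfy Z_{i−1,i} = −L_{i−1}Z_{ii} for i = 2,…,n and Z_{i+1,i} = −M_{i+1}Z_{ii} for i = 1,…,n−1, where L_i and M_i are the matrices defined by the recursions L_1 = T_1 = A_1⁻¹B_1, T_i = I − A_i⁻¹C_{i−1}L_{i−1}, L_i = T_i⁻¹A_i⁻¹B_i (i = 2,…,n−1) and M_n = W_n = A_n⁻¹C_{n−1}, W_i = I − A_i⁻¹B_iM_{i+1}, M_i = W_i⁻¹A_i⁻¹C_{i−1} (i = n−1,…,2). -/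
/-!
Row `i` of `A A⁻¹ = I`, read in a column `j ≠ i` and multiplied by `A_i⁻¹`, is the three-term
recurrence `P_i Z_{i-1,j} + Z_{ij} + Q_i Z_{i+1,j} = 0` with `P_i = A_i⁻¹C_{i-1}` and
`Q_i = A_i⁻¹B_i`. Eliminating forward from `i = 1`, where `P_1 = 0`, gives
`Z_{ij} = -L_i Z_{i+1,j}` for all `i < j` as long as every `T_{i+1} = 1 - P_{i+1} L_i` is
invertible, which holds once `‖L_i‖ < 1`. That bound propagates by induction:
`L_i = Q_i + P_i L_{i-1} L_i` together with `‖P_i‖ + ‖Q_i‖ ≤ 1`, `P_i ≠ 0` and `‖L_{i-1}‖ < 1`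
forces `‖L_i‖ < 1`. Eliminating backward from `i = n` is the same argument with the block order
reversed and gives the statement for `M`.
-/

open scoped Matrix
attribute [local instance] Matrix.linftyOpNormedRing

open scoped Ring

section ThreeTermRecurrence

theorem norm_lt_one_of_eq_add_mul_mul {R : Type*} [NormedRing R] {P Q ℓ x : R}
    (hPQ : ‖P‖ + ‖Q‖ ≤ 1) (hP : P ≠ 0) (hℓ : ‖ℓ‖ < 1) (hx : x = Q + P * ℓ * x) : ‖x‖ < 1 := by
  have hbound : ‖x‖ ≤ ‖Q‖ + ‖P‖ * ‖ℓ‖ * ‖x‖ :=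
    calc ‖x‖ ≤ ‖Q‖ + ‖P * ℓ * x‖ := (congrArg norm hx).trans_le (norm_add_le _ _)
      _ ≤ ‖Q‖ + ‖P‖ * ‖ℓ‖ * ‖x‖ := by gcongr; exact norm_mul₃_le
  have hPℓ : ‖P‖ * ‖ℓ‖ < ‖P‖ := mul_lt_of_lt_one_right (norm_pos_iff.mpr hP) hℓ
  by_contra! hx1
  have hPℓ_le_one : ‖P‖ * ‖ℓ‖ ≤ 1 := by linarith [norm_nonneg Q]
  nlinarith [mul_nonneg (sub_nonneg.mpr hx1) (sub_nonneg.mpr hPℓ_le_one)]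

theorem isUnit_one_sub_mul_of_norm {R : Type*} [NormedRing R] [HasSummableGeomSeries R] {P ℓ : R}
    (hP : ‖P‖ ≤ 1) (hℓ : ‖ℓ‖ < 1) : IsUnit (1 - P * ℓ) :=
  isUnit_one_sub_of_norm_lt_one <| (norm_mul_le P ℓ).trans_lt <|
    (mul_le_of_le_one_left (norm_nonneg ℓ) hP).trans_lt hℓ

variable {R : Type*} {N : ℕ} {P Q L : ℕ → R}

theorem eq_neg_mul_succ_of_threeTerm_of_isUnit [Ring R] {y : ℕ → R} (hP1 : P 1 = 0)
    (hL1 : L 1 = Q 1)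
    (hL : ∀ k, 2 ≤ k → k ≤ N → L k = (1 - P k * L (k - 1))⁻¹ʳ * Q k)
    (hT : ∀ k, 2 ≤ k → k ≤ N → IsUnit (1 - P k * L (k - 1)))
    (hy : ∀ k, 1 ≤ k → k ≤ N → P k * y (k - 1) + y k + Q k * y (k + 1) = 0) :
    ∀ k, 1 ≤ k → k ≤ N → y k = -(L k * y (k + 1)) := by
  intro k hk
  induction k, hk using Nat.le_induction with
  | base =>
    intro hN
    have h := hy 1 le_rfl hN
    rw [hP1, zero_mul, zero_add] at h
    rw [hL1, eq_neg_iff_add_eq_zero, h]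
  | succ k hk ih =>
    intro hN
    have hLy : L k * y (k + 1) = -y k := by rw [ih (by omega), neg_neg]
    have hrow := hy (k + 1) (by omega) hN
    have hTk := hT (k + 1) (by omega) hN
    rw [Nat.add_sub_cancel] at hrow hTk
    have hTy : (1 - P (k + 1) * L k) * y (k + 1) = -(Q (k + 1) * y (k + 1 + 1)) := by
      rw [sub_mul, one_mul, mul_assoc, hLy, mul_neg, sub_neg_eq_add]
      exact eq_neg_of_add_eq_zero_left (by rw [← hrow]; abel)
    rw [hL (k + 1) (by omega) hN, Nat.add_sub_cancel, mul_assoc, ← neg_neg (Q (k + 1) * _), ← hTy,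
      mul_neg, Ring.inverse_mul_cancel_left _ _ hTk, neg_neg]

theorem norm_lt_one_of_schurRecurrence [NormedRing R] [HasSummableGeomSeries R]
    (hdom : ∀ k, 2 ≤ k → k ≤ N → ‖P k‖ + ‖Q k‖ ≤ 1) (hP : ∀ k, 2 ≤ k → k ≤ N → P k ≠ 0)
    (hQ1 : ‖Q 1‖ < 1) (hL1 : L 1 = Q 1)
    (hL : ∀ k, 2 ≤ k → k ≤ N → L k = (1 - P k * L (k - 1))⁻¹ʳ * Q k) :
    ∀ k, 1 ≤ k → k ≤ N → ‖L k‖ < 1 := by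
  intro k hk
  induction k, hk using Nat.le_induction with
  | base => exact fun _ ↦ hL1 ▸ hQ1
  | succ k hk ih =>
    intro hN
    have hdomk := hdom (k + 1) (by omega) hN
    have hTk : IsUnit (1 - P (k + 1) * L k) :=
      isUnit_one_sub_mul_of_norm (by linarith [norm_nonneg (Q (k + 1))]) (ih (by omega))
    have hLk := hL (k + 1) (by omega) hN
    rw [Nat.add_sub_cancel] at hLk
    refine norm_lt_one_of_eq_add_mul_mul hdomk (hP (k + 1) (by omega) hN) (ih (by omega)) ?_
    refine eq_add_of_sub_eq ?_
    nth_rewrite 1 [← one_mul (L (k + 1))]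
    rw [← sub_mul, hLk, Ring.mul_inverse_cancel_left _ _ hTk]

theorem eq_neg_mul_succ_of_threeTerm_of_diagDominant [NormedRing R] [HasSummableGeomSeries R]
    {y : ℕ → R} (hdom : ∀ k, 2 ≤ k → k ≤ N → ‖P k‖ + ‖Q k‖ ≤ 1)
    (hP : ∀ k, 2 ≤ k → k ≤ N → P k ≠ 0) (hQ1 : ‖Q 1‖ < 1) (hP1 : P 1 = 0) (hL1 : L 1 = Q 1)
    (hL : ∀ k, 2 ≤ k → k ≤ N → L k = (1 - P k * L (k - 1))⁻¹ʳ * Q k)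
    (hy : ∀ k, 1 ≤ k → k ≤ N → P k * y (k - 1) + y k + Q k * y (k + 1) = 0) :
    ∀ k, 1 ≤ k → k ≤ N → y k = -(L k * y (k + 1)) :=
  eq_neg_mul_succ_of_threeTerm_of_isUnit hP1 hL1 hL (fun k hk hN ↦
    isUnit_one_sub_mul_of_norm (by linarith [hdom k hk hN, norm_nonneg (Q k)])
      (norm_lt_one_of_schurRecurrence hdom hP hQ1 hL1 hL (k - 1) (by omega) (by omega))) hy

end ThreeTermRecurrence

-- The uniformity of `Matrix.linftyOpNormedRing` agrees with the product uniformity only up to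
-- unfolding, so the product's `CompleteSpace` instance has to be supplied by hand.
instance Matrix.linftyOpHasSummableGeomSeries {ι α : Type*} [Fintype ι] [DecidableEq ι]
    [NormedRing α] [CompleteSpace α] : HasSummableGeomSeries (Matrix ι ι α) :=
  @instHasSummableGeomSeriesOfCompleteSpace _ _
    (by exact (inferInstance : CompleteSpace (Matrix ι ι α)))

theorem sum_range_tridiag {M : Type*} [AddCommMonoid M] {n i : ℕ} (hi : i < n)
    (a b c : ℕ → M) (hb : b n = 0) (hc : c 0 = 0) :
    ∑ p ∈ Finset.range n, (if i = p then a p else if i + 1 = p then b p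
      else if p + 1 = i then c (p + 1) else 0) = c i + a i + b (i + 1) := by
  have hsplit : ∀ p, (if i = p then a p else if i + 1 = p then b p
      else if p + 1 = i then c (p + 1) else 0) =
      (if p + 1 = i then c (p + 1) else 0) + (if i = p then a p else 0) +
        (if i + 1 = p then b p else 0) := by
    intro p
    split_ifs <;> first | omega | simp
  rw [Finset.sum_congr rfl fun p _ ↦ hsplit p, Finset.sum_add_distrib, Finset.sum_add_distrib,
    Finset.sum_ite_eq, Finset.sum_ite_eq, if_pos (Finset.mem_range.mpr hi)]
  have hc' : ∑ p ∈ Finset.range n, (if p + 1 = i then c (p + 1) else 0) = c i := by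
    cases i with
    | zero => simp [hc]
    | succ i => simp [Finset.sum_ite_eq', Nat.lt_of_succ_lt hi]
  have hb' : (if i + 1 ∈ Finset.range n then b (i + 1) else 0) = b (i + 1) := by
    split_ifs with h
    · rfl
    · rw [show i + 1 = n by simp at h; omega, hb]
  rw [hc', hb']

variable {n m : ℕ} {A B C : ℕ → Matrix (Fin m) (Fin m) ℂ}

theorem blockTridiag_block (i p : Fin n) :
    Matrix.of (fun k l ↦ blockTridiag n m A B C (i, k) (p, l)) =
      if (i : ℕ) = p then A (p + 1) else if (i : ℕ) + 1 = p then B p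
      else if (p : ℕ) + 1 = i then C (p + 1) else 0 := by
  ext k l
  simp only [blockTridiag, Matrix.of_apply, Fin.ext_iff]
  split_ifs <;> simp_all

theorem blockTridiag_mul_block (hC0 : C 0 = 0) (hBn : B n = 0)
    (X : Matrix (Fin n × Fin m) (Fin n × Fin m) ℂ) (Y : ℕ → ℕ → Matrix (Fin m) (Fin m) ℂ)
    (hY : ∀ i j : Fin n, Y (i + 1) (j + 1) = Matrix.of fun k l ↦ X (i, k) (j, l)) (i j : Fin n) :
    Matrix.of (fun k l ↦ (blockTridiag n m A B C * X) (i, k) (j, l)) =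
      C i * Y i (j + 1) + A (i + 1) * Y (i + 1) (j + 1) + B (i + 1) * Y (i + 1 + 1) (j + 1) := by
  have hmul := congrFun (congrFun
    (map_mul (Matrix.compRingEquiv (Fin n) (Fin m) ℂ).symm (blockTridiag n m A B C) X) i) j
  rw [Matrix.mul_apply] at hmul
  calc Matrix.of (fun k l ↦ (blockTridiag n m A B C * X) (i, k) (j, l))
      = ∑ p : Fin n, (if (i : ℕ) = p then A (p + 1) else if (i : ℕ) + 1 = p then B p
          else if (p : ℕ) + 1 = i then C (p + 1) else 0) * Y (p + 1) (j + 1) := by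
        refine hmul.trans (Finset.sum_congr rfl fun p _ ↦ ?_)
        rw [← blockTridiag_block, hY]
        rfl
    _ = ∑ p ∈ Finset.range n, (if (i : ℕ) = p then A (p + 1) else if (i : ℕ) + 1 = p then B p
          else if p + 1 = i then C (p + 1) else 0) * Y (p + 1) (j + 1) :=
        Fin.sum_univ_eq_sum_range (fun p ↦ (if (i : ℕ) = p then A (p + 1)
          else if (i : ℕ) + 1 = p then B p else if p + 1 = i then C (p + 1) else 0) *
            Y (p + 1) (j + 1)) n
    _ = _ := by
        simp only [ite_mul, zero_mul]
        exact sum_range_tridiag i.isLt (fun p ↦ A (p + 1) * Y (p + 1) (j + 1))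
          (fun p ↦ B p * Y (p + 1) (j + 1)) (fun q ↦ C q * Y q (j + 1))
          (by rw [hBn, zero_mul]) (by rw [hC0, zero_mul])

theorem blockTridiag_inv_row (hC0 : C 0 = 0) (hBn : B n = 0)
    (hD : IsUnit (blockTridiag n m A B C)) {Z : ℕ → ℕ → Matrix (Fin m) (Fin m) ℂ}
    (hZ : ∀ i j : Fin n, Z ((i : ℕ) + 1) ((j : ℕ) + 1) =
      Matrix.of fun k l ↦ (blockTridiag n m A B C)⁻¹ (i, k) (j, l))
    {i j : ℕ} (hi : 1 ≤ i) (hin : i ≤ n) (hj : 1 ≤ j) (hjn : j ≤ n) (hij : i ≠ j)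
    (hA : IsUnit (A i)) :
    (A i)⁻¹ * C (i - 1) * Z (i - 1) j + Z i j + (A i)⁻¹ * B i * Z (i + 1) j = 0 := by
  obtain ⟨i, rfl⟩ := Nat.exists_eq_add_of_le' hi
  obtain ⟨j, rfl⟩ := Nat.exists_eq_add_of_le' hj
  have hrow := blockTridiag_mul_block (A := A) hC0 hBn _ Z hZ ⟨i, by omega⟩ ⟨j, by omega⟩
  rw [Matrix.mul_nonsing_inv _ ((Matrix.isUnit_iff_isUnit_det _).mp hD)] at hrow
  have hzero : (Matrix.of fun k l ↦ (1 : Matrix (Fin n × Fin m) (Fin n × Fin m) ℂ)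
      (⟨i, by omega⟩, k) (⟨j, by omega⟩, l)) = 0 := by
    ext k l
    exact Matrix.one_apply_ne (by simp; omega)
  rw [hzero] at hrow
  have h := congrArg ((A (i + 1))⁻¹ * ·) hrow.symm
  simp only [mul_add, mul_zero, ← mul_assoc,
    Matrix.nonsing_inv_mul _ ((Matrix.isUnit_iff_isUnit_det _).mp hA), one_mul] at h
  simpa [add_comm] using h

variable [NeZero m] {Z : ℕ → ℕ → Matrix (Fin m) (Fin m) ℂ}

theorem blockTridiag_inv_superdiag (hC0 : C 0 = 0) (hBn : B n = 0)
    (hD : IsUnit (blockTridiag n m A B C))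
    (hC : ∀ i, 1 ≤ i → i ≤ n - 1 → IsUnit (C i))
    (hA : ∀ i, 1 ≤ i → i ≤ n → IsUnit (A i))
    (hdom : ∀ i, 1 ≤ i → i ≤ n → ‖(A i)⁻¹ * C (i - 1)‖ + ‖(A i)⁻¹ * B i‖ ≤ 1)
    (hB1 : ‖(A 1)⁻¹ * B 1‖ < 1) {L : ℕ → Matrix (Fin m) (Fin m) ℂ}
    (hL1 : L 1 = (A 1)⁻¹ * B 1)
    (hL : ∀ i, 2 ≤ i → i ≤ n - 1 →
      L i = (1 - (A i)⁻¹ * C (i - 1) * L (i - 1))⁻¹ * ((A i)⁻¹ * B i))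
    (hZ : ∀ i j : Fin n, Z ((i : ℕ) + 1) ((j : ℕ) + 1) =
      Matrix.of fun k l ↦ (blockTridiag n m A B C)⁻¹ (i, k) (j, l))
    {j : ℕ} (hj : 2 ≤ j) (hjn : j ≤ n) :
    Z (j - 1) j = -(L (j - 1) * Z j j) := by
  have hy := eq_neg_mul_succ_of_threeTerm_of_diagDominant (N := j - 1)
    (P := fun k ↦ (A k)⁻¹ * C (k - 1)) (Q := fun k ↦ (A k)⁻¹ * B k) (y := fun k ↦ Z k j)
    (fun k hk hkN ↦ hdom k (by omega) (by omega))
    (fun k hk hkN ↦ ((Matrix.isUnit_nonsing_inv_iff.mpr (hA k (by omega) (by omega))).mul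
      (hC (k - 1) (by omega) (by omega))).ne_zero)
    hB1 (by simp [hC0]) hL1
    (fun k hk hkN ↦ by rw [hL k hk (by omega), Matrix.nonsing_inv_eq_ringInverse])
    (fun k hk hkN ↦ blockTridiag_inv_row hC0 hBn hD hZ hk (by omega) (by omega) hjn (by omega)
      (hA k hk (by omega)))
    (j - 1) (by omega) le_rfl
  simpa [Nat.sub_add_cancel (by omega : 1 ≤ j)] using hy

theorem blockTridiag_inv_subdiag (hC0 : C 0 = 0) (hBn : B n = 0)
    (hD : IsUnit (blockTridiag n m A B C))
    (hB : ∀ i, 1 ≤ i → i ≤ n - 1 → IsUnit (B i))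
    (hA : ∀ i, 1 ≤ i → i ≤ n → IsUnit (A i))
    (hdom : ∀ i, 1 ≤ i → i ≤ n → ‖(A i)⁻¹ * C (i - 1)‖ + ‖(A i)⁻¹ * B i‖ ≤ 1)
    (hCn : ‖(A n)⁻¹ * C (n - 1)‖ < 1) {M : ℕ → Matrix (Fin m) (Fin m) ℂ}
    (hMn : M n = (A n)⁻¹ * C (n - 1))
    (hM : ∀ i, 2 ≤ i → i ≤ n - 1 →
      M i = (1 - (A i)⁻¹ * B i * M (i + 1))⁻¹ * ((A i)⁻¹ * C (i - 1)))
    (hZ : ∀ i j : Fin n, Z ((i : ℕ) + 1) ((j : ℕ) + 1) =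
      Matrix.of fun k l ↦ (blockTridiag n m A B C)⁻¹ (i, k) (j, l))
    {i : ℕ} (hi : 1 ≤ i) (hin : i ≤ n - 1) :
    Z (i + 1) i = -(M (i + 1) * Z i i) := by
  -- the forward elimination, run on the blocks reindexed by `k ↦ n + 1 - k`
  have hy := eq_neg_mul_succ_of_threeTerm_of_diagDominant (N := n - i)
    (P := fun k ↦ (A (n + 1 - k))⁻¹ * B (n + 1 - k))
    (Q := fun k ↦ (A (n + 1 - k))⁻¹ * C (n + 1 - k - 1))
    (L := fun k ↦ M (n + 1 - k)) (y := fun k ↦ Z (n + 1 - k) i)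
    (fun k hk hkN ↦ by rw [add_comm]; exact hdom (n + 1 - k) (by omega) (by omega))
    (fun k hk hkN ↦ ((Matrix.isUnit_nonsing_inv_iff.mpr (hA _ (by omega) (by omega))).mul
      (hB (n + 1 - k) (by omega) (by omega))).ne_zero)
    (by simpa using hCn) (by simp [hBn]) (by simp [hMn])
    (fun k hk hkN ↦ by
      rw [hM (n + 1 - k) (by omega) (by omega), Matrix.nonsing_inv_eq_ringInverse,
        show n + 1 - (k - 1) = n + 1 - k + 1 by omega])
    (fun k hk hkN ↦ by
      have h := blockTridiag_inv_row hC0 hBn hD hZ (i := n + 1 - k) (j := i) (by omega)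
        (by omega) hi (by omega) (by omega) (hA _ (by omega) (by omega))
      rw [show n + 1 - (k - 1) = n + 1 - k + 1 by omega,
        show n + 1 - (k + 1) = n + 1 - k - 1 by omega, ← h]
      abel)
    (n - i) (by omega) le_rfl
  rwa [show n + 1 - (n - i) = i + 1 by omega, show n + 1 - (n - i + 1) = i by omega] at hy

theorem offdiag_blocks_of_inverse_general
    (n m : ℕ) (hm : 1 ≤ m)
    (A B C : ℕ → Matrix (Fin m) (Fin m) ℂ)
    (hC0 : C 0 = 0) (hBn : B n = 0)
    (hAinv : IsUnit (blockTridiag n m A B C))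
    (hB : ∀ i, 1 ≤ i → i ≤ n - 1 → IsUnit (B i))
    (hC : ∀ i, 1 ≤ i → i ≤ n - 1 → IsUnit (C i))
    (hAi : ∀ i, 1 ≤ i → i ≤ n → IsUnit (A i))
    (hdom : ∀ i, 1 ≤ i → i ≤ n → ‖(A i)⁻¹ * C (i - 1)‖ + ‖(A i)⁻¹ * B i‖ ≤ 1)
    (hB1 : ‖(A 1)⁻¹ * B 1‖ < 1)
    (hCn : ‖(A n)⁻¹ * C (n - 1)‖ < 1)
    (L T : ℕ → Matrix (Fin m) (Fin m) ℂ)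
    (hL1 : L 1 = (A 1)⁻¹ * B 1)
    (hT : ∀ i, 2 ≤ i → i ≤ n - 1 → T i = 1 - (A i)⁻¹ * C (i - 1) * L (i - 1))
    (hL : ∀ i, 2 ≤ i → i ≤ n - 1 → L i = (T i)⁻¹ * ((A i)⁻¹ * B i))
    (M W : ℕ → Matrix (Fin m) (Fin m) ℂ)
    (hMn : M n = (A n)⁻¹ * C (n - 1))
    (hW : ∀ i, 2 ≤ i → i ≤ n - 1 → W i = 1 - (A i)⁻¹ * B i * M (i + 1))
    (hM : ∀ i, 2 ≤ i → i ≤ n - 1 → M i = (W i)⁻¹ * ((A i)⁻¹ * C (i - 1)))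
    (Z : ℕ → ℕ → Matrix (Fin m) (Fin m) ℂ)
    (hZ : ∀ i j : Fin n, Z ((i : ℕ) + 1) ((j : ℕ) + 1) =
      Matrix.of fun k l => (blockTridiag n m A B C)⁻¹ (i, k) (j, l)) :
    (∀ i, 2 ≤ i → i ≤ n → Z (i - 1) i = -(L (i - 1) * Z i i)) ∧
    (∀ i, 1 ≤ i → i ≤ n - 1 → Z (i + 1) i = -(M (i + 1) * Z i i)) := by
  have : NeZero m := ⟨by omega⟩
  exact ⟨fun j hj hjn ↦ blockTridiag_inv_superdiag hC0 hBn hAinv hC hAi hdom hB1 hL1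
      (fun i h₁ h₂ ↦ by rw [hL i h₁ h₂, hT i h₁ h₂]) hZ hj hjn,
    fun i hi hin ↦ blockTridiag_inv_subdiag hC0 hBn hAinv hB hAi hdom hCn hMn
      (fun i h₁ h₂ ↦ by rw [hM i h₁ h₂, hW i h₁ h₂]) hZ hi hin⟩

theorem offdiag_blocks_of_inverse
    (n m : ℕ) (hn : 2 ≤ n) (hm : 1 ≤ m)
    (A B C : ℕ → Matrix (Fin m) (Fin m) ℂ)
    (hC0 : C 0 = 0) (hBn : B n = 0)
    (hAinv : IsUnit (blockTridiag n m A B C))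
    (hB : ∀ i, 1 ≤ i → i ≤ n - 1 → IsUnit (B i))
    (hC : ∀ i, 1 ≤ i → i ≤ n - 1 → IsUnit (C i))
    (hAi : ∀ i, 1 ≤ i → i ≤ n → IsUnit (A i))
    (hdom : ∀ i, 1 ≤ i → i ≤ n → ‖(A i)⁻¹ * C (i - 1)‖ + ‖(A i)⁻¹ * B i‖ ≤ 1)
    (hB1 : ‖(A 1)⁻¹ * B 1‖ < 1)
    (hCn : ‖(A n)⁻¹ * C (n - 1)‖ < 1)
    (L T : ℕ → Matrix (Fin m) (Fin m) ℂ)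
    (hL1 : L 1 = (A 1)⁻¹ * B 1) (hT1 : T 1 = (A 1)⁻¹ * B 1)
    (hT : ∀ i, 2 ≤ i → i ≤ n - 1 → T i = 1 - (A i)⁻¹ * C (i - 1) * L (i - 1))
    (hL : ∀ i, 2 ≤ i → i ≤ n - 1 → L i = (T i)⁻¹ * ((A i)⁻¹ * B i))
    (M W : ℕ → Matrix (Fin m) (Fin m) ℂ)
    (hMn : M n = (A n)⁻¹ * C (n - 1)) (hWn : W n = (A n)⁻¹ * C (n - 1))
    (hW : ∀ i, 2 ≤ i → i ≤ n - 1 → W i = 1 - (A i)⁻¹ * B i * M (i + 1))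
    (hM : ∀ i, 2 ≤ i → i ≤ n - 1 → M i = (W i)⁻¹ * ((A i)⁻¹ * C (i - 1)))
    (Z : ℕ → ℕ → Matrix (Fin m) (Fin m) ℂ)
    (hZ : ∀ i j : Fin n, Z ((i : ℕ) + 1) ((j : ℕ) + 1) =
      Matrix.of fun k l => (blockTridiag n m A B C)⁻¹ (i, k) (j, l)) :
    (∀ i, 2 ≤ i → i ≤ n → Z (i - 1) i = -(L (i - 1) * Z i i)) ∧
    (∀ i, 1 ≤ i → i ≤ n - 1 → Z (i + 1) i = -(M (i + 1) * Z i i)) :=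
  offdiag_blocks_of_inverse_general n m hm A B C hC0 hBn hAinv hB hC hAi hdom hB1 hCn L T hL1 hT hL
    M W hMn hW hM Z hZ
end
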